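/- arXiv:2411.18366 — 8 statements merged into one kernel-verified Lean document; each statement's English description precedes it below -/
import Mathlib

section
/- Let f = a_0 + a_1x + ⋯ + a_nx^n ∈ ℤ[x] be a polynomial of degree n ≥ 1 with a_n ≠ 0, and set H_f = max_{0 ≤ i ≤ n−1} |a_i|/|a_n|. Suppose there exist positive integers m and d such that m ≥ H_f + d + 1, d is a unitary divisor of f(m), and |f(m)/d| > 1. Then in any factorization f = c·f_1⋯f_r where c is a nonzero integer and each f_i is a nonconstant irreducible polynomial in ℤ[x], the number of factors satisfies r ≤ Ω(f(m)/d). -/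
open Polynomial

noncomputable section StmtZeroAux

/-- number of prime factors (with multiplicity) coprime to `d` -/
private def Tf (d a : ℕ) : ℕ := a.factorization.sum fun p k => if p ∣ d then 0 else k

private lemma Tf_mul (d : ℕ) {a b : ℕ} (ha : a ≠ 0) (hb : b ≠ 0) :
    Tf d (a * b) = Tf d a + Tf d b := by
  unfold Tf
  rw [Nat.factorization_mul ha hb, Finsupp.sum_add_index']
  · intro p; simp
  · intro p k1 k2; split <;> simp

private lemma Tf_prod (d : ℕ) {ι : Type*} (s : Finset ι) (g : ι → ℕ)
    (hg : ∀ i ∈ s, g i ≠ 0) :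
    Tf d (∏ i ∈ s, g i) = ∑ i ∈ s, Tf d (g i) := by
  classical
  induction s using Finset.cons_induction with
  | empty => simp [Tf]
  | cons i s his ih =>
    rw [Finset.prod_cons, Finset.sum_cons,
      Tf_mul d (hg i (Finset.mem_cons_self i s))
        (Finset.prod_ne_zero_iff.2 fun j hj => hg j (Finset.mem_cons_of_mem hj)),
      ih fun j hj => hg j (Finset.mem_cons_of_mem hj)]

private lemma omega_prod {ι : Type*} (s : Finset ι) (g : ι → ℕ)
    (hg : ∀ i ∈ s, g i ≠ 0) :
    ArithmeticFunction.cardFactors (∏ i ∈ s, g i)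
      = ∑ i ∈ s, ArithmeticFunction.cardFactors (g i) := by
  classical
  induction s using Finset.cons_induction with
  | empty => simp
  | cons i s his ih =>
    rw [Finset.prod_cons, Finset.sum_cons,
      ArithmeticFunction.cardFactors_mul (hg i (Finset.mem_cons_self i s))
        (Finset.prod_ne_zero_iff.2 fun j hj => hg j (Finset.mem_cons_of_mem hj)),
      ih fun j hj => hg j (Finset.mem_cons_of_mem hj)]

private lemma omega_eq_sum {a : ℕ} (ha : a ≠ 0) :
    ArithmeticFunction.cardFactors a = a.factorization.sum fun _ k => k := by
  conv_lhs => rw [← Nat.factorization_prod_pow_eq_self ha]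
  rw [Finsupp.prod, Finsupp.sum,
    omega_prod _ _ (fun p hp => pow_ne_zero _ (Nat.prime_of_mem_primeFactors
      (by rwa [← Nat.support_factorization])).ne_zero)]
  refine Finset.sum_congr rfl fun p hp => ?_
  exact ArithmeticFunction.cardFactors_apply_prime_pow
    (Nat.prime_of_mem_primeFactors (by rwa [← Nat.support_factorization]))

private lemma Tf_le_omega (d : ℕ) {a : ℕ} (ha : a ≠ 0) :
    Tf d a ≤ ArithmeticFunction.cardFactors a := by
  rw [omega_eq_sum ha, Tf, Finsupp.sum, Finsupp.sum]
  exact Finset.sum_le_sum fun p hp => by split <;> simp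

private lemma Tf_self (d : ℕ) : Tf d d = 0 := by
  rw [Tf, Finsupp.sum]
  refine Finset.sum_eq_zero fun p hp => ?_
  rw [if_pos (Nat.dvd_of_mem_primeFactors (by rwa [← Nat.support_factorization]))]

private lemma one_le_Tf {d b F Nn : ℕ} (hd : 0 < d) (hdb : d < b) (hbF : b ∣ F)
    (hF : F = d * Nn) (hcop : Nat.Coprime d Nn) (hNn : Nn ≠ 0) : 1 ≤ Tf d b := by
  by_contra h
  push_neg at h
  interval_cases hT : Tf d b
  rw [Tf, Finsupp.sum, Finset.sum_eq_zero_iff] at hT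
  have hb0 : b ≠ 0 := by omega
  have hF0 : F ≠ 0 := by rw [hF]; exact Nat.mul_ne_zero hd.ne' hNn
  have hdvd : b ∣ d := by
    rw [← Nat.factorization_le_iff_dvd hb0 hd.ne']
    intro p
    by_cases hp : p ∈ b.factorization.support
    · have hpd : p ∣ d := by
        by_contra hpd
        have := hT p hp
        rw [if_neg hpd] at this
        exact (Finsupp.mem_support_iff.1 hp) this
      have hpprime : p.Prime := Nat.prime_of_mem_primeFactors
        (by rwa [← Nat.support_factorization])
      have h1 : b.factorization p ≤ F.factorization p :=
        (Nat.factorization_le_iff_dvd hb0 hF0).2 hbF p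
      have h2 : Nn.factorization p = 0 := by
        refine Nat.factorization_eq_zero_of_not_dvd fun hpN => ?_
        have hpg : p ∣ Nat.gcd d Nn := Nat.dvd_gcd hpd hpN
        rw [hcop] at hpg
        exact hpprime.one_lt.ne' (Nat.eq_one_of_dvd_one hpg)
      rw [hF, Nat.factorization_mul hd.ne' hNn] at h1
      simpa [h2] using h1
    · simp [Finsupp.notMem_support_iff.1 hp]
  exact absurd (Nat.le_of_dvd hd hdvd) (not_le.2 hdb)

private lemma one_le_multiset_prod (s : Multiset ℝ) (h : ∀ x ∈ s, (1:ℝ) ≤ x) :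
    1 ≤ s.prod := by
  induction s using Multiset.induction with
  | empty => simp
  | cons a s ih =>
    rw [Multiset.prod_cons]
    have ha := h a (Multiset.mem_cons_self a s)
    have hs := ih fun x hx => h x (Multiset.mem_cons_of_mem hx)
    nlinarith

private lemma norm_msprod (s : Multiset ℂ) : ‖s.prod‖ = (s.map norm).prod := by
  induction s using Multiset.induction with
  | empty => simp
  | cons a s ih => simp [norm_mul, ih]

private lemma eval_abs_gt (g : Polynomial ℤ) (m d : ℕ) (hd1 : (1:ℝ) ≤ d)
    (hgd : 0 < g.natDegree)
    (hroot : ∀ α : ℂ, (g.map (Int.castRingHom ℂ)).IsRoot α → (d : ℝ) < ‖(m : ℂ) - α‖) :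
    (d : ℤ) < |g.eval (m : ℤ)| := by
  set Q := g.map (Int.castRingHom ℂ) with hQ
  have hg0 : g ≠ 0 := fun h => by simp [h] at hgd
  have hinj : Function.Injective (Int.castRingHom ℂ) := fun a b h => by
    simpa using h
  have hQ0 : Q ≠ 0 := by
    rwa [hQ, Ne, Polynomial.map_eq_zero_iff hinj]
  have hsp : Q.Splits := IsAlgClosed.splits Q
  have hcard : Multiset.card Q.roots = g.natDegree := by
    rw [Polynomial.splits_iff_card_roots.mp hsp, hQ,
      Polynomial.natDegree_map_eq_of_injective hinj]
  have hne : Q.roots ≠ 0 := by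
    intro h
    rw [h] at hcard
    simp at hcard
    omega
  obtain ⟨α₀, hα₀⟩ := Multiset.exists_mem_of_ne_zero hne
  obtain ⟨t, ht⟩ := Multiset.exists_cons_of_mem hα₀
  have heval : (↑(g.eval (m : ℤ)) : ℂ) = Q.eval (m : ℂ) := by
    rw [hQ]
    have := Polynomial.eval_intCast_map (Int.castRingHom ℂ) g (m : ℤ)
    push_cast at this ⊢
    rw [this]
    simp
  have hfact := hsp.eq_prod_roots
  have hnorm : ‖Q.eval (m : ℂ)‖
      = ‖Q.leadingCoeff‖ * ((Q.roots.map fun a => ‖(m : ℂ) - a‖).prod) := by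
    conv_lhs => rw [hfact]
    rw [eval_mul, eval_C, eval_multiset_prod, Multiset.map_map, norm_mul,
      norm_msprod, Multiset.map_map]
    congr 2
    ext a
    simp
  have hlead : (1:ℝ) ≤ ‖Q.leadingCoeff‖ := by
    rw [hQ, Polynomial.leadingCoeff_map_of_injective hinj]
    show (1:ℝ) ≤ ‖(↑g.leadingCoeff : ℂ)‖
    rw [Complex.norm_intCast]
    exact_mod_cast Int.one_le_abs (Polynomial.leadingCoeff_ne_zero.mpr hg0)
  have hrest : (1:ℝ) ≤ ((t.map fun a => ‖(m : ℂ) - a‖).prod) := by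
    refine one_le_multiset_prod _ fun x hx => ?_
    obtain ⟨a, hat, rfl⟩ := Multiset.mem_map.mp hx
    have : a ∈ Q.roots := ht ▸ Multiset.mem_cons_of_mem hat
    exact hd1.trans (hroot a ((Polynomial.mem_roots hQ0).mp this)).le
  have h0 : (d:ℝ) < ‖(m:ℂ) - α₀‖ := hroot α₀ ((Polynomial.mem_roots hQ0).mp hα₀)
  have key : (d:ℝ) < ‖Q.eval (m:ℂ)‖ := by
    rw [hnorm, ht, Multiset.map_cons, Multiset.prod_cons]
    calc (d:ℝ) < ‖(m:ℂ) - α₀‖ := h0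
      _ ≤ ‖(m:ℂ) - α₀‖ * (t.map fun a => ‖(m : ℂ) - a‖).prod :=
          le_mul_of_one_le_right (norm_nonneg _) hrest
      _ ≤ _ := le_mul_of_one_le_left (by positivity) hlead
  rw [← heval, Complex.norm_intCast] at key
  exact_mod_cast key

private lemma cb_le (f : Polynomial ℤ) (n : ℕ) (hn : 1 ≤ n) (hdeg : f.natDegree = n) :
    ((f.map (Int.castRingHom ℂ)).cauchyBound : ℝ) ≤
      ((Finset.range n).sup' (Finset.nonempty_range_iff.mpr (by omega))
        (fun i => (|f.coeff i| : ℝ) / |f.coeff n|)) + 1 := by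
  set P := f.map (Int.castRingHom ℂ) with hP
  have hinj : Function.Injective (Int.castRingHom ℂ) := fun a b h => by simpa using h
  have hPdeg : P.natDegree = n := by
    rw [hP, Polynomial.natDegree_map_eq_of_injective hinj, hdeg]
  have hne : (Finset.range P.natDegree).Nonempty := by
    rw [hPdeg]; exact Finset.nonempty_range_iff.mpr (by omega)
  obtain ⟨i0, hi0mem, hi0⟩ := Finset.exists_mem_eq_sup (Finset.range P.natDegree) hne
    (fun i => ‖P.coeff i‖₊)
  have hlead : P.leadingCoeff = ((f.coeff n : ℤ) : ℂ) := by
    rw [hP, Polynomial.leadingCoeff_map_of_injective hinj, Polynomial.leadingCoeff, hdeg]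
    simp
  rw [Polynomial.cauchyBound, hi0]
  push_cast
  have hcoeff : ‖P.coeff i0‖ = |(f.coeff i0 : ℝ)| := by
    rw [hP, Polynomial.coeff_map]
    simpa using Complex.norm_intCast (f.coeff i0)
  have hleadn : ‖P.leadingCoeff‖ = |(f.coeff n : ℝ)| := by
    rw [hlead]
    simpa using Complex.norm_intCast (f.coeff n)
  rw [hcoeff, hleadn]
  have := Finset.le_sup' (fun i => (|f.coeff i| : ℝ) / |f.coeff n|)
    (by rwa [hPdeg] at hi0mem : i0 ∈ Finset.range n)
  push_cast at this
  linarith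

end StmtZeroAux

/-- If `m ≥ H_f + d + 1`, `d` is a unitary divisor of `f(m)` and
`|f(m)/d| > 1`, then any factorization of `f` into nonconstant irreducibles in `ℤ[x]`
has at most `Ω(f(m)/d)` factors. -/
theorem stmt_0 (f : Polynomial ℤ) (n : ℕ) (hn : 1 ≤ n) (hdeg : f.natDegree = n)
    (m d : ℕ) (hm : 0 < m) (hd : 0 < d)
    (hmd : ((Finset.range n).sup' (Finset.nonempty_range_iff.mpr (by omega))
        (fun i => (|f.coeff i| : ℝ) / |f.coeff n|)) + d + 1 ≤ (m : ℝ))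
    (hdvd : (d : ℤ) ∣ f.eval (m : ℤ))
    (hcop : Int.gcd (d : ℤ) (f.eval (m : ℤ) / d) = 1)
    (hbig : 1 < |f.eval (m : ℤ) / d|)
    (c : ℤ) (hc : c ≠ 0) (r : ℕ) (fs : Fin r → Polynomial ℤ)
    (hirr : ∀ i, Irreducible (fs i)) (hnc : ∀ i, 0 < (fs i).natDegree)
    (hfact : f = C c * ∏ i, fs i) :
    r ≤ ArithmeticFunction.cardFactors (f.eval (m : ℤ) / d).natAbs := by
  classical
  set N : ℤ := f.eval (m : ℤ) / (d : ℤ) with hN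
  have hNd : (d : ℤ) * N = f.eval (m : ℤ) := Int.mul_ediv_cancel' hdvd
  have hN0 : N ≠ 0 := by
    intro h; rw [h] at hbig; simp at hbig
  have hev0 : f.eval (m : ℤ) ≠ 0 := by
    rw [← hNd]
    exact mul_ne_zero (by exact_mod_cast hd.ne') hN0
  have hf0 : f ≠ 0 := fun h => hev0 (by simp [h])
  -- bound on roots of f over ℂ
  set P := f.map (Int.castRingHom ℂ) with hP
  have hP0 : P ≠ 0 := by
    rw [hP, Ne, Polynomial.map_eq_zero_iff (fun a b h => by simpa using h)]
    exact hf0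
  have hcb : (P.cauchyBound : ℝ) ≤ (m : ℝ) - d := by
    have := cb_le f n hn hdeg
    rw [← hP] at this
    linarith
  have hroot : ∀ α : ℂ, P.IsRoot α → (d : ℝ) < ‖(m : ℂ) - α‖ := by
    intro α hα
    have h1 : (‖α‖ : ℝ) < (P.cauchyBound : ℝ) := by
      exact_mod_cast Polynomial.IsRoot.norm_lt_cauchyBound hP0 hα
    have h2 : ‖(m : ℂ)‖ - ‖α‖ ≤ ‖(m : ℂ) - α‖ := norm_sub_norm_le _ _
    have h3 : ‖(m : ℂ)‖ = (m : ℝ) := by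
      simpa using Complex.norm_natCast m
    linarith
  have hd1 : (1 : ℝ) ≤ d := by exact_mod_cast hd
  -- each factor is large at m
  have hbi : ∀ i, (d : ℤ) < |(fs i).eval (m : ℤ)| := by
    intro i
    refine eval_abs_gt (fs i) m d hd1 (hnc i) fun α hα => hroot α ?_
    have hdvdf : fs i ∣ f := by
      rw [hfact]
      exact Dvd.dvd.mul_left (Finset.dvd_prod_of_mem fs (Finset.mem_univ i)) _
    obtain ⟨k, hk⟩ := Polynomial.map_dvd (Int.castRingHom ℂ) hdvdf
    rw [Polynomial.IsRoot, ← hP] at *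
    rw [hk, eval_mul, hα, zero_mul]
  -- pass to natural numbers
  set b : Fin r → ℕ := fun i => ((fs i).eval (m : ℤ)).natAbs with hb
  have hdb : ∀ i, d < b i := by
    intro i
    have := hbi i
    rw [Int.abs_eq_natAbs] at this
    exact_mod_cast this
  have hb0 : ∀ i, b i ≠ 0 := fun i => by have := hdb i; omega
  set F : ℕ := (f.eval (m : ℤ)).natAbs with hF
  set Nn : ℕ := N.natAbs with hNn
  have hNn0 : Nn ≠ 0 := Int.natAbs_ne_zero.mpr hN0
  have hFN : F = d * Nn := by
    rw [hF, ← hNd, Int.natAbs_mul]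
    simp [hNn]
  have hcopn : Nat.Coprime d Nn := by
    have := hcop
    rwa [Int.gcd_def, Int.natAbs_natCast, ← hNn] at this
  -- factorization of F
  have hevalprod : f.eval (m : ℤ) = c * ∏ i, (fs i).eval (m : ℤ) := by
    rw [hfact, eval_mul, eval_C, Polynomial.eval_prod]
  have hFsplit : F = c.natAbs * ∏ i, b i := by
    rw [hF, hevalprod, Int.natAbs_mul]
    congr 1
    exact map_prod ({ toFun := Int.natAbs, map_one' := rfl, map_mul' := Int.natAbs_mul } : ℤ →* ℕ) _ _
  have hbF : ∀ i, b i ∣ F := by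
    intro i
    rw [hFsplit]
    exact Dvd.dvd.mul_left (Finset.dvd_prod_of_mem b (Finset.mem_univ i)) _
  -- count prime factors
  have hc0 : c.natAbs ≠ 0 := Int.natAbs_ne_zero.mpr hc
  calc r = ∑ _i : Fin r, 1 := by simp
    _ ≤ ∑ i : Fin r, Tf d (b i) := Finset.sum_le_sum fun i _ =>
        one_le_Tf hd (hdb i) (hbF i) hFN hcopn hNn0
    _ = Tf d (∏ i, b i) := (Tf_prod d _ _ fun i _ => hb0 i).symm
    _ ≤ Tf d c.natAbs + Tf d (∏ i, b i) := Nat.le_add_left _ _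
    _ = Tf d F := by
        rw [hFsplit, Tf_mul d hc0 (Finset.prod_ne_zero_iff.2 fun i _ => hb0 i)]
    _ = Tf d Nn := by
        rw [hFN, Tf_mul d hd.ne' hNn0, Tf_self, zero_add]
    _ ≤ ArithmeticFunction.cardFactors Nn := Tf_le_omega d hNn0
end

section
/- Let f = a_0 + a_1x + ⋯ + a_nx^n ∈ ℤ[x] be a polynomial of degree n ≥ 2 with a_n ≠ 0, and set H_f = max_{0 ≤ i ≤ n−1} |a_i|/|a_n|. Suppose there exist positive integers m and d such that m ≥ H_f + d + 1, d is a unitary divisor of f(m), and |f(m)/d| is a prime number. Then f cannot be written as a product of two nonconstant polynomials with integer coefficients. -/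
open Polynomial

noncomputable def Complex.abs : AbsoluteValue ℂ ℝ :=
  IsAbsoluteValue.toAbsoluteValue (norm : ℂ → ℝ)

theorem Complex.norm_eq_abs (z : ℂ) : ‖z‖ = Complex.abs z := rfl

@[simp]
theorem Complex.abs_intCast (n : ℤ) : Complex.abs (n : ℂ) = |(n : ℝ)| := by
  rw [← Complex.norm_eq_abs, Complex.norm_intCast]

@[simp]
theorem Complex.abs_natCast (n : ℕ) : Complex.abs (n : ℂ) = (n : ℝ) := by
  rw [← Complex.norm_eq_abs, Complex.norm_natCast]

private lemma root_bound (f : Polynomial ℤ) (n : ℕ) (hn : 1 ≤ n) (hdeg : f.natDegree = n)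
    (H : ℝ) (hH : 0 ≤ H)
    (hcoeff : ∀ i < n, |(f.coeff i : ℝ)| ≤ H * |(f.coeff n : ℝ)|)
    (z : ℂ) (hz : (f.map (Int.castRingHom ℂ)).eval z = 0) :
    Complex.abs z < 1 + H := by
  by_contra hle
  push_neg at hle
  set x := Complex.abs z with hx
  have hx1 : (1:ℝ) ≤ x := by linarith
  have hf0 : f ≠ 0 := fun h => by simp [h] at hdeg; omega
  have hfn : f.coeff n ≠ 0 := by
    rw [← hdeg]; exact Polynomial.leadingCoeff_ne_zero.mpr hf0
  have hfnR : (0:ℝ) < |(f.coeff n : ℝ)| := by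
    rw [abs_pos]; exact_mod_cast hfn
  -- expand evaluation
  have hdm : (f.map (Int.castRingHom ℂ)).natDegree < n + 1 := by
    have : (f.map (Int.castRingHom ℂ)).natDegree ≤ f.natDegree := Polynomial.natDegree_map_le
    omega
  rw [Polynomial.eval_eq_sum_range' hdm] at hz
  simp only [Polynomial.coeff_map, Int.coe_castRingHom] at hz
  rw [Finset.sum_range_succ] at hz
  have key : ((f.coeff n : ℤ) : ℂ) * z ^ n = -∑ i ∈ Finset.range n, ((f.coeff i : ℤ) : ℂ) * z ^ i := by
    linear_combination hz
  have habs : |(f.coeff n : ℝ)| * x ^ n ≤ ∑ i ∈ Finset.range n, |(f.coeff i : ℝ)| * x ^ i := by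
    have h1 : Complex.abs (((f.coeff n : ℤ) : ℂ) * z ^ n)
        = |(f.coeff n : ℝ)| * x ^ n := by
      simp [map_mul, map_pow, Complex.abs_intCast, hx]
    calc |(f.coeff n : ℝ)| * x ^ n
        = Complex.abs (-∑ i ∈ Finset.range n, ((f.coeff i : ℤ) : ℂ) * z ^ i) := by
          rw [← key, h1]
      _ ≤ ∑ i ∈ Finset.range n, Complex.abs (((f.coeff i : ℤ) : ℂ) * z ^ i) := by
          rw [AbsoluteValue.map_neg]
          exact Complex.abs.sum_le _ _
      _ = ∑ i ∈ Finset.range n, |(f.coeff i : ℝ)| * x ^ i := by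
          refine Finset.sum_congr rfl fun i _ => ?_
          simp [map_mul, map_pow, Complex.abs_intCast, hx]
  have hsum_nonneg : (0:ℝ) ≤ ∑ i ∈ Finset.range n, x ^ i :=
    Finset.sum_nonneg fun i _ => pow_nonneg (by linarith) i
  have h2 : |(f.coeff n : ℝ)| * x ^ n ≤ |(f.coeff n : ℝ)| * (H * ∑ i ∈ Finset.range n, x ^ i) := by
    calc |(f.coeff n : ℝ)| * x ^ n
        ≤ ∑ i ∈ Finset.range n, |(f.coeff i : ℝ)| * x ^ i := habs
      _ ≤ ∑ i ∈ Finset.range n, (H * |(f.coeff n : ℝ)|) * x ^ i := by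
          refine Finset.sum_le_sum fun i hi => ?_
          have := hcoeff i (Finset.mem_range.mp hi)
          have hxi : (0:ℝ) ≤ x ^ i := pow_nonneg (by linarith) i
          nlinarith
      _ = |(f.coeff n : ℝ)| * (H * ∑ i ∈ Finset.range n, x ^ i) := by
          rw [Finset.mul_sum, Finset.mul_sum]
          exact Finset.sum_congr rfl fun i _ => by ring
  have h3 : x ^ n ≤ H * ∑ i ∈ Finset.range n, x ^ i :=
    le_of_mul_le_mul_left (by linarith [h2]) hfnR
  have h4 : H * ∑ i ∈ Finset.range n, x ^ i ≤ (∑ i ∈ Finset.range n, x ^ i) * (x - 1) := by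
    have : H ≤ x - 1 := by linarith
    nlinarith
  have h5 : (∑ i ∈ Finset.range n, x ^ i) * (x - 1) = x ^ n - 1 := geom_sum_mul x n
  linarith

private lemma eval_lb (g : Polynomial ℤ) (hg : 1 ≤ g.natDegree) (m : ℕ) (d : ℕ) (hd : 1 ≤ d)
    (hroots : ∀ z : ℂ, (g.map (Int.castRingHom ℂ)).eval z = 0 → Complex.abs z < (m:ℝ) - d) :
    (d : ℤ) < |g.eval (m : ℤ)| := by
  set φ := Int.castRingHom ℂ with hφ
  set gc := g.map φ with hgc
  have hinj : Function.Injective ⇑φ := fun a b hab => by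
    simpa [hφ] using hab
  have hg0 : g ≠ 0 := fun h => by simp [h] at hg
  have hgc0 : gc ≠ 0 := (Polynomial.map_ne_zero_iff hinj).mpr hg0
  have hdegc : gc.natDegree = g.natDegree := g.natDegree_map_eq_of_injective hinj
  have hsplit : Polynomial.Splits gc := IsAlgClosed.splits gc
  have hcard : Multiset.card gc.roots = g.natDegree := by
    have := hsplit.natDegree_eq_card_roots
    rw [hdegc] at this
    omega
  have hfact := hsplit.eq_prod_roots
  set w : ℂ := ((m : ℤ) : ℂ) with hw
  have heval : gc.eval w = gc.leadingCoeff * (gc.roots.map fun a => w - a).prod := by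
    conv_lhs => rw [hfact]
    rw [Polynomial.eval_mul, Polynomial.eval_C, Polynomial.eval_multiset_prod,
      Multiset.map_map]
    simp
  have habs : Complex.abs (gc.eval w)
      = Complex.abs gc.leadingCoeff * (gc.roots.map fun a => Complex.abs (w - a)).prod := by
    rw [heval, map_mul, map_multiset_prod, Multiset.map_map]
    rfl
  -- each root factor > d
  have hwabs : Complex.abs w = (m : ℝ) := by
    simp [hw, Complex.abs_intCast]
  have hfac : ∀ a ∈ gc.roots, (d : ℝ) < Complex.abs (w - a) := by
    intro a ha
    have hr : gc.eval a = 0 := Polynomial.isRoot_of_mem_roots ha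
    have hlt := hroots a hr
    have : (m : ℝ) - Complex.abs a ≤ Complex.abs (w - a) := by
      have := norm_sub_norm_le w a
      simpa [Complex.norm_eq_abs, hwabs] using this
    linarith
  -- leading coeff abs ≥ 1
  have hlc : gc.leadingCoeff = ((g.leadingCoeff : ℤ) : ℂ) :=
    Polynomial.leadingCoeff_map_of_injective hinj g
  have hlc1 : (1:ℝ) ≤ Complex.abs gc.leadingCoeff := by
    rw [hlc, Complex.abs_intCast]
    have hne0 : g.leadingCoeff ≠ 0 := Polynomial.leadingCoeff_ne_zero.mpr hg0
    have hpos : (0:ℤ) < |g.leadingCoeff| := abs_pos.mpr hne0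
    have : (1:ℤ) ≤ |g.leadingCoeff| := hpos
    calc (1:ℝ) ≤ ((|g.leadingCoeff| : ℤ) : ℝ) := by exact_mod_cast this
      _ = |((g.leadingCoeff : ℤ) : ℝ)| := by push_cast; ring
  -- roots nonempty
  have hne : gc.roots ≠ 0 := by
    intro h0
    rw [h0] at hcard; simp at hcard; omega
  obtain ⟨r, hr⟩ := Multiset.exists_mem_of_ne_zero hne
  have hrest : gc.roots = r ::ₘ gc.roots.erase r := (Multiset.cons_erase hr).symm
  have hprod : (d : ℝ) < (gc.roots.map fun a => Complex.abs (w - a)).prod := by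
    rw [hrest, Multiset.map_cons, Multiset.prod_cons]
    have h1 : (1:ℝ) ≤ ((gc.roots.erase r).map fun a => Complex.abs (w - a)).prod := by
      apply Multiset.one_le_prod
      intro x hx
      obtain ⟨a, ha, rfl⟩ := Multiset.mem_map.mp hx
      have : a ∈ gc.roots := Multiset.mem_of_mem_erase ha
      have := hfac a this
      have : (1:ℝ) ≤ (d:ℝ) := by exact_mod_cast hd
      linarith [hfac a (Multiset.mem_of_mem_erase ha)]
    have h2 := hfac r hr
    nlinarith [AbsoluteValue.nonneg Complex.abs (w - r)]
  have hfinal : (d : ℝ) < Complex.abs (gc.eval w) := by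
    rw [habs]
    have hp0 : (0:ℝ) ≤ (gc.roots.map fun a => Complex.abs (w - a)).prod := by
      apply Multiset.prod_nonneg
      intro x hx
      obtain ⟨a, ha, rfl⟩ := Multiset.mem_map.mp hx
      exact AbsoluteValue.nonneg _ _
    nlinarith
  have heq : gc.eval w = ((g.eval (m : ℤ) : ℤ) : ℂ) := by
    rw [hgc, hw, Polynomial.eval_map]
    exact Polynomial.eval₂_at_apply φ (m : ℤ)
  rw [heq, Complex.abs_intCast] at hfinal
  have : ((d:ℤ) : ℝ) < ((|g.eval (m:ℤ)| : ℤ) : ℝ) := by push_cast; push_cast at hfinal; linarith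
  exact_mod_cast this

/-- If `m ≥ H_f + d + 1`, `d` is a unitary divisor of `f(m)` and
`|f(m)/d|` is prime, then `f` is not a product of two nonconstant integer polynomials. -/
theorem stmt_1 (f : Polynomial ℤ) (n : ℕ) (hn : 2 ≤ n) (hdeg : f.natDegree = n)
    (m d : ℕ) (hm : 0 < m) (hd : 0 < d)
    (hmd : ((Finset.range n).sup' (Finset.nonempty_range_iff.mpr (by omega))
        (fun i => (|f.coeff i| : ℝ) / |f.coeff n|)) + d + 1 ≤ (m : ℝ))
    (hdvd : (d : ℤ) ∣ f.eval (m : ℤ))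
    (hcop : Int.gcd (d : ℤ) (f.eval (m : ℤ) / d) = 1)
    (hprime : Prime |f.eval (m : ℤ) / d|) :
    ¬ ∃ g h : Polynomial ℤ, 0 < g.natDegree ∧ 0 < h.natDegree ∧ f = g * h := by
  rintro ⟨g, h, hg, hh, hf⟩
  set H : ℝ := ((Finset.range n).sup' (Finset.nonempty_range_iff.mpr (by omega))
      (fun i => (|f.coeff i| : ℝ) / |f.coeff n|)) with hH
  have hf0 : f ≠ 0 := fun h0 => by simp [h0] at hdeg; omega
  have hfn : f.coeff n ≠ 0 := by
    rw [← hdeg]; exact Polynomial.leadingCoeff_ne_zero.mpr hf0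
  have hfnR : (0:ℝ) < |(f.coeff n : ℝ)| := by
    rw [abs_pos]; exact_mod_cast hfn
  have hHnn : 0 ≤ H := by
    rw [hH]
    have h0 : (0:ℕ) ∈ Finset.range n := Finset.mem_range.mpr (by omega)
    refine le_trans ?_ (Finset.le_sup' _ h0)
    positivity
  have hcoeff : ∀ i < n, |(f.coeff i : ℝ)| ≤ H * |(f.coeff n : ℝ)| := by
    intro i hi
    have := Finset.le_sup' (f := fun i => (|f.coeff i| : ℝ) / |f.coeff n|)
      (Finset.mem_range.mpr hi)
    rw [← hH] at this
    simp only [Int.cast_abs] at this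
    rw [div_le_iff₀ hfnR] at this
    linarith
  -- every root of f is small
  have hroot : ∀ z : ℂ, (f.map (Int.castRingHom ℂ)).eval z = 0 → Complex.abs z < (m:ℝ) - d := by
    intro z hz
    have := root_bound f n (by omega) hdeg H hHnn hcoeff z hz
    have hmd' : H + d + 1 ≤ (m:ℝ) := hmd
    linarith
  -- factor roots are roots of f
  have hfactroot : ∀ (q : Polynomial ℤ), q ∣ f →
      ∀ z : ℂ, (q.map (Int.castRingHom ℂ)).eval z = 0 → Complex.abs z < (m:ℝ) - d := by
    intro q ⟨c, hc⟩ z hz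
    apply hroot
    rw [hc, Polynomial.map_mul, Polynomial.eval_mul, hz, zero_mul]
  have hgm : (d : ℤ) < |g.eval (m : ℤ)| :=
    eval_lb g hg m d hd (hfactroot g ⟨h, hf⟩)
  have hhm : (d : ℤ) < |h.eval (m : ℤ)| :=
    eval_lb h hh m d hd (hfactroot h ⟨g, by rw [hf, mul_comm]⟩)
  -- arithmetic endgame
  set p : ℤ := f.eval (m : ℤ) / d with hp
  have hN : f.eval (m : ℤ) = d * p := (Int.mul_ediv_cancel' hdvd).symm
  have hp0 : p ≠ 0 := fun h0 => by simp [h0] at hprime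
  have hpdvd : |p| ∣ g.eval (m : ℤ) * h.eval (m : ℤ) := by
    rw [← Polynomial.eval_mul, ← hf, hN]
    exact Dvd.dvd.mul_left ((abs_dvd p p).mpr dvd_rfl) d
  have hNe : g.eval (m : ℤ) * h.eval (m : ℤ) = d * p := by
    rw [← Polynomial.eval_mul, ← hf]; exact hN
  have habsp : |p| ≠ 0 := fun h0 => hp0 (abs_eq_zero.mp h0)
  rcases (Prime.dvd_mul hprime).mp hpdvd with hcase | hcase
  · -- |p| ∣ g(m) : then h(m) ∣ d
    obtain ⟨s, hs⟩ := hcase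
    have key : (d : ℤ) * |p| = |p| * (|s| * |h.eval (m:ℤ)|) := by
      have : |d * p| = |g.eval (m:ℤ) * h.eval (m:ℤ)| := by rw [hNe]
      rw [hs] at this
      rw [abs_mul] at this
      rw [abs_mul, abs_mul, abs_abs] at this
      have hdabs : |(d:ℤ)| = d := abs_of_nonneg (by positivity)
      rw [hdabs] at this
      rw [this]; ring
    have hdq : |h.eval (m:ℤ)| ∣ (d : ℤ) := by
      refine ⟨|s|, ?_⟩
      have := mul_left_cancel₀ habsp (by linarith [key] : |p| * ((d:ℤ)) = |p| * (|s| * |h.eval (m:ℤ)|))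
      linarith [this]
    have := Int.le_of_dvd (by exact_mod_cast hd) hdq
    omega
  · -- |p| ∣ h(m) : then g(m) ∣ d
    obtain ⟨s, hs⟩ := hcase
    have key : (d : ℤ) * |p| = |p| * (|s| * |g.eval (m:ℤ)|) := by
      have : |d * p| = |g.eval (m:ℤ) * h.eval (m:ℤ)| := by rw [hNe]
      rw [hs] at this
      rw [abs_mul] at this
      rw [abs_mul, abs_mul, abs_abs] at this
      have hdabs : |(d:ℤ)| = d := abs_of_nonneg (by positivity)
      rw [hdabs] at this
      rw [this]; ring
    have hdq : |g.eval (m:ℤ)| ∣ (d : ℤ) := by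
      refine ⟨|s|, ?_⟩
      have := mul_left_cancel₀ habsp (by linarith [key] : |p| * ((d:ℤ)) = |p| * (|s| * |g.eval (m:ℤ)|))
      linarith [this]
    have := Int.le_of_dvd (by exact_mod_cast hd) hdq
    omega
end

section
/- Let K be a field and let f = a_0(x) + a_1(x)y + ⋯ + a_n(x)y^n ∈ K[x][y] be a polynomial with a_0 a_n ≠ 0 and n ≥ 1. Fix a real number ρ > 1 and set H_f = ρ^{M}, where M = max_{0 ≤ i ≤ n−1} deg a_i − deg a_n (with deg 0 = −∞). Suppose there exists a polynomial a ∈ K[x] with deg a ≥ log(H_f + 2)/log ρ, and let ν_a be the number of irreducible factors of the univariate polynomial f(x, a(x)) in K[x], counted with multiplicity. Then in any factorization f = c·f_1⋯f_r where c ∈ K is nonzero and each f_i is a nonconstant irreducible polynomial in K[x,y], the number of factors satisfies r ≤ ν_a. In particular, if ν_a = 1 then f is irreducible in K[x,y]. -/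
open Polynomial

noncomputable section MurtyAux

variable {K : Type*} [Field K]

/-- The swap map `K[x][y] → K[y][x]`. -/
noncomputable def swapBivar : Polynomial (Polynomial K) →+* Polynomial (Polynomial K) :=
  eval₂RingHom (eval₂RingHom ((C : Polynomial K →+* Polynomial (Polynomial K)).comp
    (C : K →+* Polynomial K)) X) (C X)

lemma swapBivar_coeff (p : Polynomial (Polynomial K)) (i j : ℕ) :
    ((swapBivar p).coeff i).coeff j = (p.coeff j).coeff i := by
  induction p using Polynomial.induction_on' with
  | add p q hp hq => simp [map_add, coeff_add, hp, hq]
  | monomial k b =>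
    induction b using Polynomial.induction_on' with
    | add b c hb hc =>
      have : (monomial k (b + c) : Polynomial (Polynomial K)) = monomial k b + monomial k c := by
        rw [map_add]
      simp only [this, map_add, coeff_add, hb, hc]
    | monomial m c =>
      have h1 : swapBivar (monomial k (monomial m c) : Polynomial (Polynomial K)) =
          monomial m (monomial k c) := by
        rw [swapBivar, coe_eval₂RingHom, eval₂_monomial, coe_eval₂RingHom, eval₂_monomial]
        rw [RingHom.coe_comp, Function.comp_apply, ← C_pow]
        rw [← C_mul_X_pow_eq_monomial, ← C_mul_X_pow_eq_monomial, C_mul]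
        ring
      rw [h1, coeff_monomial, coeff_monomial]
      rcases eq_or_ne m i with rfl | hmi
      · rcases eq_or_ne k j with rfl | hkj
        · simp [coeff_monomial]
        · simp [coeff_monomial, hkj]
      · rcases eq_or_ne k j with rfl | hkj
        · simp [coeff_monomial, hmi]
        · simp [coeff_monomial, hmi, hkj]

lemma swapBivar_ne_zero {p : Polynomial (Polynomial K)} (hp : p ≠ 0) : swapBivar p ≠ 0 := by
  intro h
  apply hp
  ext j i
  have := swapBivar_coeff p i j
  rw [h] at this
  simpa using this.symm

/-- `maxXDeg p` is the maximum over the coefficients of `p` of their degree in `x`. -/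
noncomputable def maxXDeg (p : Polynomial (Polynomial K)) : ℕ :=
  p.support.sup fun i => (p.coeff i).natDegree

lemma coeff_natDegree_le_maxXDeg {p : Polynomial (Polynomial K)} {i : ℕ}
    (h : p.coeff i ≠ 0) : (p.coeff i).natDegree ≤ maxXDeg p :=
  Finset.le_sup (f := fun i => (p.coeff i).natDegree) (mem_support_iff.mpr h)

lemma natDegree_swapBivar (p : Polynomial (Polynomial K)) :
    (swapBivar p).natDegree = maxXDeg p := by
  rcases eq_or_ne p 0 with rfl | hp
  · simp [maxXDeg, swapBivar]
  apply le_antisymm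
  · rw [natDegree_le_iff_coeff_eq_zero]
    intro N hN
    ext j
    rw [swapBivar_coeff, coeff_zero]
    rcases eq_or_ne (p.coeff j) 0 with h | h
    · simp [h]
    · exact coeff_eq_zero_of_natDegree_lt (lt_of_le_of_lt (coeff_natDegree_le_maxXDeg h) hN)
  · obtain ⟨j, hj, hje⟩ := Finset.exists_mem_eq_sup p.support
      (nonempty_support_iff.mpr hp) (fun i => (p.coeff i).natDegree)
    apply le_natDegree_of_ne_zero (n := maxXDeg p)
    intro h
    have h2 : ((swapBivar p).coeff (maxXDeg p)).coeff j = 0 := by rw [h, coeff_zero]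
    rw [swapBivar_coeff] at h2
    rw [show maxXDeg p = (p.coeff j).natDegree from hje] at h2
    exact (mem_support_iff.mp hj) (leadingCoeff_eq_zero.mp h2)

lemma maxXDeg_mul {p q : Polynomial (Polynomial K)} (hp : p ≠ 0) (hq : q ≠ 0) :
    maxXDeg (p * q) = maxXDeg p + maxXDeg q := by
  rw [← natDegree_swapBivar, ← natDegree_swapBivar, ← natDegree_swapBivar, map_mul]
  exact natDegree_mul (swapBivar_ne_zero hp) (swapBivar_ne_zero hq)

lemma natDegree_eval_le (q : Polynomial (Polynomial K)) (a : Polynomial K) :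
    (q.eval a).natDegree ≤ maxXDeg q + q.natDegree * a.natDegree := by
  rw [eval_eq_sum, Polynomial.sum]
  apply natDegree_sum_le_of_forall_le
  intro i hi
  refine natDegree_mul_le.trans ?_
  rw [natDegree_pow]
  exact add_le_add (coeff_natDegree_le_maxXDeg (mem_support_iff.mp hi))
    (Nat.mul_le_mul_right _ (le_natDegree_of_mem_supp _ hi))

lemma maxXDeg_eraseLead_le (p : Polynomial (Polynomial K)) :
    maxXDeg p.eraseLead ≤ maxXDeg p := by
  apply Finset.sup_le
  intro i hi
  rw [eraseLead_support, Finset.mem_erase] at hi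
  rw [eraseLead_coeff_of_ne i hi.1]
  exact Finset.le_sup (f := fun i => (p.coeff i).natDegree) hi.2

/-- Key lemma: if `maxXDeg g < deg(lc g) + deg a` and `g` has positive `y`-degree,
then `g(x, a)` is nonzero of degree at least `deg a`. -/
lemma eval_ne_zero_of_large {g : Polynomial (Polynomial K)} {a : Polynomial K}
    (hg : g ≠ 0) (hk : 1 ≤ g.natDegree) (hd : 1 ≤ a.natDegree)
    (hDd : maxXDeg g < g.leadingCoeff.natDegree + a.natDegree) :
    g.eval a ≠ 0 ∧ 1 ≤ (g.eval a).natDegree := by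
  set k := g.natDegree with hkdef
  set d := a.natDegree with hddef
  set L := g.leadingCoeff with hLdef
  have ha0 : a ≠ 0 := by
    intro h
    rw [hddef, h, natDegree_zero] at hd
    omega
  have hL0 : L ≠ 0 := leadingCoeff_ne_zero.mpr hg
  have hNdeg : (L * a ^ k).natDegree = L.natDegree + k * d := by
    rw [natDegree_mul hL0 (pow_ne_zero _ ha0), natDegree_pow]
  set N := L.natDegree + k * d with hNdef
  have hdN : d ≤ N := by
    have : d ≤ k * d := Nat.le_mul_of_pos_left d hk
    omega
  have hlt : (g.eraseLead.eval a).natDegree < N := by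
    have h1 : (g.eraseLead.eval a).natDegree ≤ maxXDeg g.eraseLead + g.eraseLead.natDegree * d :=
      natDegree_eval_le _ _
    have h2 : maxXDeg g.eraseLead ≤ maxXDeg g := maxXDeg_eraseLead_le g
    have h3 : g.eraseLead.natDegree ≤ k - 1 := eraseLead_natDegree_le g
    have h4 : g.eraseLead.natDegree * d ≤ (k - 1) * d := Nat.mul_le_mul_right _ h3
    have h5 : (k - 1) * d = k * d - d := Nat.sub_one_mul k d
    have h6 : d ≤ k * d := Nat.le_mul_of_pos_left d hk
    omega
  have hsplit : g.eval a = g.eraseLead.eval a + L * a ^ k := by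
    conv_lhs => rw [← eraseLead_add_monomial_natDegree_leadingCoeff g]
    rw [eval_add, eval_monomial]
  have hcoeff : (g.eval a).coeff N ≠ 0 := by
    rw [hsplit, coeff_add, coeff_eq_zero_of_natDegree_lt hlt, zero_add, ← hNdeg,
      coeff_natDegree]
    exact leadingCoeff_ne_zero.mpr (mul_ne_zero hL0 (pow_ne_zero _ ha0))
  have hne : g.eval a ≠ 0 := fun h => hcoeff (by rw [h, coeff_zero])
  exact ⟨hne, le_trans hd (le_trans hdN (le_natDegree_of_ne_zero hcoeff))⟩

/-- Counting lemma in a UFD: a product of `r` nonzero nonunits has at least `r`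
irreducible factors. -/
lemma le_card_factors {α : Type*} [CommMonoidWithZero α] [Nontrivial α]
    [UniqueFactorizationMonoid α] :
    ∀ (r : ℕ) (xs : Fin r → α), (∀ i, xs i ≠ 0) → (∀ i, ¬IsUnit (xs i)) →
      ∀ z, Associated z (∏ i, xs i) →
        r ≤ (UniqueFactorizationMonoid.factors z).card := by
  intro r
  induction r with
  | zero => intro xs _ _ z _; exact Nat.zero_le _
  | succ m ih =>
    intro xs hne hnu z hz
    have hprod_ne : (∏ i : Fin (m + 1), xs i) ≠ 0 := Finset.prod_ne_zero_iff.mpr fun i _ => hne i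
    have hz0 : z ≠ 0 := fun h => hprod_ne (hz.eq_zero_iff.mp h)
    have hsucc : (∏ i : Fin (m + 1), xs i) = xs 0 * ∏ i : Fin m, xs i.succ :=
      Fin.prod_univ_succ xs
    have hrest_ne : (∏ i : Fin m, xs i.succ) ≠ 0 :=
      Finset.prod_ne_zero_iff.mpr fun i _ => hne i.succ
    have h1 : Multiset.Rel Associated (UniqueFactorizationMonoid.factors z)
        (UniqueFactorizationMonoid.factors (xs 0 * ∏ i : Fin m, xs i.succ)) := by
      apply UniqueFactorizationMonoid.factors_rel_of_associated
      rw [← hsucc]; exact hz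
    have h2 := UniqueFactorizationMonoid.factors_mul (hne 0) hrest_ne
    have hcard : (UniqueFactorizationMonoid.factors z).card =
        (UniqueFactorizationMonoid.factors (xs 0)).card +
        (UniqueFactorizationMonoid.factors (∏ i : Fin m, xs i.succ)).card := by
      rw [Multiset.card_eq_card_of_rel h1, Multiset.card_eq_card_of_rel h2, Multiset.card_add]
    have hx0 : 1 ≤ (UniqueFactorizationMonoid.factors (xs 0)).card := by
      have := (UniqueFactorizationMonoid.factors_pos (x := xs 0) (hne 0)).mpr (hnu 0)
      exact Multiset.card_pos.mpr (by simpa using this.ne')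
    have hrec := ih (fun i => xs i.succ) (fun i => hne i.succ) (fun i => hnu i.succ)
      (∏ i : Fin m, xs i.succ) (Associated.refl _)
    omega

end MurtyAux

/-- Bivariate extension of Murty's criterion. Here `f ∈ K[x][y]`,
`M = max_{0 ≤ i ≤ n-1, aᵢ ≠ 0} (deg aᵢ - deg aₙ)`, `H_f = ρᴹ`, and `ν_a` is the number of
irreducible factors (with multiplicity) of `f(x, a(x))` in `K[x]`. If
`deg a ≥ log(H_f + 2)/log ρ`, then any factorization of `f` into irreducibles in `K[x,y]`
has at most `ν_a` factors; in particular if `ν_a = 1` then `f` is irreducible. -/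
theorem stmt_5 (K : Type*) [Field K] (f : Polynomial (Polynomial K)) (n : ℕ)
    (hn : 1 ≤ n) (hdeg : f.natDegree = n) (h0 : f.coeff 0 ≠ 0) (hn0 : f.coeff n ≠ 0)
    (ρ : ℝ) (hρ : 1 < ρ) (M : ℤ)
    (hM : IsGreatest {z : ℤ | ∃ i < n, f.coeff i ≠ 0 ∧
        z = ((f.coeff i).natDegree : ℤ) - ((f.coeff n).natDegree : ℤ)} M)
    (H : ℝ) (hH : H = ρ ^ M)
    (a : Polynomial K) (ha : Real.log (H + 2) / Real.log ρ ≤ (a.natDegree : ℝ))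
    (ν : ℕ) (hν : ν = (UniqueFactorizationMonoid.factors (f.eval a)).card) :
    (∀ (c : K), c ≠ 0 → ∀ (r : ℕ) (fs : Fin r → Polynomial (Polynomial K)),
      (∀ i, Irreducible (fs i)) → f = C (C c) * ∏ i, fs i → r ≤ ν) ∧
    (ν = 1 → Irreducible f) := by
  have hρ0 : (0 : ℝ) < ρ := lt_trans one_pos hρ
  have hf0 : f ≠ 0 := fun h => h0 (by rw [h, coeff_zero])
  set d := a.natDegree with hddef
  -- From the hypothesis on `a`: `ρ^M + 2 ≤ ρ^d`.
  have hHd : H + 2 ≤ ρ ^ (d : ℤ) := by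
    have hlogρ : 0 < Real.log ρ := Real.log_pos hρ
    have hH0 : 0 < H := by rw [hH]; exact zpow_pos hρ0 M
    have h1 : Real.log (H + 2) ≤ d * Real.log ρ := by
      have := (div_le_iff₀ hlogρ).mp ha
      linarith
    have h2 : Real.log (H + 2) ≤ Real.log (ρ ^ (d : ℤ)) := by
      rw [zpow_natCast, Real.log_pow]
      linarith [h1]
    have h3 : (0 : ℝ) < H + 2 := by linarith
    have h4 : (0 : ℝ) < ρ ^ (d : ℤ) := zpow_pos hρ0 _
    exact (Real.log_le_log_iff h3 h4).mp h2
  -- `max M 0 < d`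
  have hMd : max M 0 < (d : ℤ) := by
    rw [← zpow_lt_zpow_iff_right₀ (a := ρ) hρ]
    calc ρ ^ max M 0 < H + 2 := by
          rcases le_total 0 M with h | h
          · rw [max_eq_left h, ← hH]; linarith
          · rw [max_eq_right h, zpow_zero]
            have : 0 < H := by rw [hH]; exact zpow_pos hρ0 M
            linarith
      _ ≤ ρ ^ (d : ℤ) := hHd
  have hd1 : 1 ≤ d := by
    have : (0 : ℤ) < d := lt_of_le_of_lt (le_max_right M 0) hMd
    omega
  have ha0 : a ≠ 0 := by
    intro h
    rw [hddef, h, natDegree_zero] at hd1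
    omega
  -- `maxXDeg f ≤ deg(lc f) + max M 0`
  set t := (max M 0).toNat with htdef
  have ht : (t : ℤ) = max M 0 := Int.toNat_of_nonneg (le_max_right M 0)
  have hDf : maxXDeg f ≤ f.leadingCoeff.natDegree + t := by
    apply Finset.sup_le
    intro i hi
    have hile : i ≤ f.natDegree := le_natDegree_of_mem_supp _ hi
    rcases eq_or_ne i f.natDegree with rfl | hne
    · exact le_add_right le_rfl
    · have hilt : i < n := by omega
      have hci : f.coeff i ≠ 0 := mem_support_iff.mp hi
      have := hM.2 ⟨i, hilt, hci, rfl⟩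
      have hlc : f.leadingCoeff = f.coeff n := by rw [leadingCoeff, hdeg]
      rw [hlc]
      have h1 : ((f.coeff i).natDegree : ℤ) ≤ (f.coeff n).natDegree + max M 0 := by
        have h2 : M ≤ max M 0 := le_max_left M 0
        omega
      omega
  have htd : t < d := by omega
  -- main claim about evaluation of irreducible factors of f
  have key : ∀ (c : K), c ≠ 0 → ∀ (r : ℕ) (fs : Fin r → Polynomial (Polynomial K)),
      (∀ i, Irreducible (fs i)) → f = C (C c) * ∏ i, fs i →
      (∀ i, (fs i).eval a ≠ 0 ∧ ¬IsUnit ((fs i).eval a)) := by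
    intro c hc r fs hirr hfeq i
    have hgne : fs i ≠ 0 := (hirr i).ne_zero
    rcases Nat.eq_zero_or_pos (fs i).natDegree with hk0 | hk1
    · -- constant in y: fs i = C b with b irreducible in K[x]
      obtain ⟨b, hb⟩ := natDegree_eq_zero.mp hk0
      have hbne : b ≠ 0 := fun h => hgne (by rw [← hb, h, map_zero])
      have hbval : (fs i).eval a = b := by rw [← hb, eval_C]
      rw [hbval]
      refine ⟨hbne, fun hu => ?_⟩
      exact (hirr i).not_isUnit (by rw [← hb]; exact isUnit_C.mpr hu)
    · -- positive y-degree
      set g := fs i with hgdef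
      set h := C (C c) * ∏ j ∈ Finset.univ.erase i, fs j with hhdef
      have hfgh : f = g * h := by
        rw [hfeq, hhdef, ← Finset.mul_prod_erase Finset.univ fs (Finset.mem_univ i)]
        ring
      have hhne : h ≠ 0 := fun hz => hf0 (by rw [hfgh, hz, mul_zero])
      have hDmul : maxXDeg f = maxXDeg g + maxXDeg h := by
        rw [hfgh]; exact maxXDeg_mul hgne hhne
      have hlcmul : f.leadingCoeff.natDegree =
          g.leadingCoeff.natDegree + h.leadingCoeff.natDegree := by
        rw [hfgh, leadingCoeff_mul]
        exact natDegree_mul (leadingCoeff_ne_zero.mpr hgne) (leadingCoeff_ne_zero.mpr hhne)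
      have hlcg : g.leadingCoeff.natDegree ≤ maxXDeg g := by
        apply coeff_natDegree_le_maxXDeg
        rw [coeff_natDegree]
        exact leadingCoeff_ne_zero.mpr hgne
      have hlch : h.leadingCoeff.natDegree ≤ maxXDeg h := by
        apply coeff_natDegree_le_maxXDeg
        rw [coeff_natDegree]
        exact leadingCoeff_ne_zero.mpr hhne
      have hgD : maxXDeg g < g.leadingCoeff.natDegree + d := by omega
      have := eval_ne_zero_of_large hgne hk1 hd1 hgD
      exact ⟨this.1, fun hu => by
        have := natDegree_eq_zero_of_isUnit hu
        omega⟩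
  -- Part 1
  have part1 : ∀ (c : K), c ≠ 0 → ∀ (r : ℕ) (fs : Fin r → Polynomial (Polynomial K)),
      (∀ i, Irreducible (fs i)) → f = C (C c) * ∏ i, fs i → r ≤ ν := by
    intro c hc r fs hirr hfeq
    have hev := key c hc r fs hirr hfeq
    have hassoc : Associated (∏ i, (fs i).eval a) (f.eval a) := by
      have : f.eval a = C c * ∏ i, (fs i).eval a := by
        rw [hfeq, eval_mul, eval_C, eval_prod]
      rw [this]
      exact (associated_unit_mul_left _ _ (isUnit_C.mpr (isUnit_iff_ne_zero.mpr hc))).symm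
    rw [hν]
    exact le_card_factors r (fun i => (fs i).eval a) (fun i => (hev i).1)
      (fun i => (hev i).2) (f.eval a) hassoc.symm
  refine ⟨part1, ?_⟩
  -- Part 2
  intro hν1
  have hfactors := UniqueFactorizationMonoid.factors_prod hf0
  obtain ⟨u, hu⟩ := hfactors
  -- u is a unit of K[x][y], hence of the form C (C c)
  obtain ⟨b, hbu, hbC⟩ := Polynomial.isUnit_iff.mp u.isUnit
  obtain ⟨c, hcu, hcC⟩ := Polynomial.isUnit_iff.mp hbu
  have hc0 : c ≠ 0 := hcu.ne_zero
  set l := (UniqueFactorizationMonoid.factors f).toList with hldef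
  have hlprod : l.prod = (UniqueFactorizationMonoid.factors f).prod := Multiset.prod_toList _
  have hfin : (∏ i : Fin l.length, l.get i) = l.prod := by
    simpa using Fin.prod_univ_get l
  have hirr : ∀ i : Fin l.length, Irreducible (l.get i) := by
    intro i
    apply UniqueFactorizationMonoid.irreducible_of_factor
    exact Multiset.mem_toList.mp (l.get_mem i)
  have hfeq : f = C (C c) * ∏ i : Fin l.length, l.get i := by
    rw [hfin, hlprod, hcC, hbC, mul_comm]
    exact hu.symm
  have hlen := part1 c hc0 l.length (fun i => l.get i) hirr hfeq
  rw [hν1] at hlen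
  have hlcard : l.length = (UniqueFactorizationMonoid.factors f).card := by
    rw [hldef, Multiset.length_toList]
  have hcard1 : (UniqueFactorizationMonoid.factors f).card ≤ 1 := by rw [← hlcard]; exact hlen
  rcases Nat.le_one_iff_eq_zero_or_eq_one.mp hcard1 with h0c | h1c
  · exfalso
    have hs0 : UniqueFactorizationMonoid.factors f = 0 := Multiset.card_eq_zero.mp h0c
    have hfc : f = (u : Polynomial (Polynomial K)) := by
      rw [← hu, hs0, Multiset.prod_zero, one_mul]
    have : f.natDegree = 0 := by rw [hfc, ← hbC, natDegree_C]
    omega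
  · obtain ⟨p, hp⟩ := Multiset.card_eq_one.mp h1c
    have hassoc : Associated p f := by
      refine ⟨u, ?_⟩
      rw [← hu, hp, Multiset.prod_singleton]
    exact hassoc.irreducible (UniqueFactorizationMonoid.irreducible_of_factor p
      (by rw [hp]; simp))
end

section
/- Let f = a_0 + a_1x + ⋯ + a_nx^n ∈ ℤ[x] be a primitive polynomial of degree n ≥ 1 (the gcd of its coefficients is 1), and set H_f = max_{0 ≤ i ≤ n−1} |a_i|/|a_n|. Suppose there exist natural numbers d and m and a prime p not dividing d such that m ≥ H_f + d + 1 and f(m) = ±d·p. Then f is irreducible in ℤ[x]. -/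
open Polynomial

/-- Girstmair's irreducibility criterion. If `f` is primitive of degree
`n ≥ 1`, `p ∤ d` is prime, `m ≥ H_f + d + 1` and `f(m) = ±d·p`, then `f` is irreducible
in `ℤ[x]`. -/
theorem stmt_10 (f : Polynomial ℤ) (n : ℕ) (hn : 1 ≤ n) (hdeg : f.natDegree = n)
    (hprim : f.IsPrimitive)
    (m d : ℕ) (hm : 0 < m) (hd : 0 < d)
    (p : ℕ) (hp : p.Prime) (hpd : ¬ (p ∣ d))
    (hmd : ((Finset.range n).sup' (Finset.nonempty_range_iff.mpr (by omega))
        (fun i => (|f.coeff i| : ℝ) / |f.coeff n|)) + d + 1 ≤ (m : ℝ))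
    (hval : f.eval (m : ℤ) = (d : ℤ) * p ∨ f.eval (m : ℤ) = -((d : ℤ) * p)) :
    Irreducible f := by
  classical
  have hf0 : f ≠ 0 := by
    intro h
    rw [h, natDegree_zero] at hdeg
    omega
  have han : f.coeff n ≠ 0 := by
    rw [← hdeg]
    exact mt leadingCoeff_eq_zero.mp hf0
  have han' : (0:ℝ) < |((f.coeff n : ℤ) : ℝ)| := by
    simp only [abs_pos, ne_eq, Int.cast_eq_zero]
    exact han
  set S : ℝ := ((Finset.range n).sup' (Finset.nonempty_range_iff.mpr (by omega))
      (fun i => (|f.coeff i| : ℝ) / |f.coeff n|)) with hSdef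
  have hS0 : 0 ≤ S := by
    refine le_trans ?_ (Finset.le_sup' (f := fun i => (|f.coeff i| : ℝ) / |f.coeff n|)
      (Finset.mem_range.mpr (by omega : 0 < n)))
    positivity
  set fC : Polynomial ℂ := f.map (Int.castRingHom ℂ) with hfCdef
  have hfC0 : fC ≠ 0 := by
    rw [hfCdef]
    simpa using (Polynomial.map_ne_zero_iff (f := Int.castRingHom ℂ)
      Int.cast_injective).mpr hf0
  have hfCdeg : fC.natDegree = n := by
    rw [hfCdef, natDegree_map_eq_of_injective Int.cast_injective, hdeg]
  have hlead : fC.leadingCoeff = ((f.coeff n : ℤ) : ℂ) := by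
    rw [leadingCoeff, hfCdeg, hfCdef, coeff_map]
    rfl
  -- bound on the Cauchy bound
  have hCB : (Polynomial.cauchyBound fC : ℝ) ≤ (m : ℝ) - d := by
    have h1 : Polynomial.cauchyBound fC ≤ Real.toNNReal S + 1 := by
      rw [Polynomial.cauchyBound]
      gcongr
      rw [div_le_iff₀ (by simp [hlead, han])]
      rw [hfCdeg]
      apply Finset.sup_le
      intro i hi
      rw [← NNReal.coe_le_coe]
      push_cast
      rw [Real.coe_toNNReal _ hS0, hlead]
      have h2 : (|f.coeff i| : ℝ) / |f.coeff n| ≤ S :=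
        Finset.le_sup' (f := fun i => (|f.coeff i| : ℝ) / |f.coeff n|) hi
      push_cast at h2
      rw [div_le_iff₀ han'] at h2
      calc ‖fC.coeff i‖ = |((f.coeff i : ℤ) : ℝ)| := by
            rw [hfCdef, coeff_map]
            exact Complex.norm_intCast _
        _ ≤ S * |((f.coeff n : ℤ) : ℝ)| := by push_cast at h2 ⊢; linarith
        _ = S * ‖((f.coeff n : ℤ) : ℂ)‖ := by rw [Complex.norm_intCast]
    calc (Polynomial.cauchyBound fC : ℝ) ≤ ((Real.toNNReal S + 1 : NNReal) : ℝ) := by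
          exact_mod_cast h1
      _ = S + 1 := by rw [NNReal.coe_add, Real.coe_toNNReal _ hS0, NNReal.coe_one]
      _ ≤ (m : ℝ) - d := by linarith [hmd]
  -- key estimate for nontrivial divisors
  have key : ∀ g : Polynomial ℤ, g ∣ f → 1 ≤ g.natDegree → (d : ℤ) < |g.eval (m : ℤ)| := by
    intro g hgf hgd
    have hg0 : g ≠ 0 := by
      intro h
      rw [h, natDegree_zero] at hgd
      omega
    set gC : Polynomial ℂ := g.map (Int.castRingHom ℂ) with hgCdef
    have hgC0 : gC ≠ 0 := by
      rw [hgCdef]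
      simpa using (Polynomial.map_ne_zero_iff (f := Int.castRingHom ℂ)
        Int.cast_injective).mpr hg0
    have hgCdeg : gC.natDegree = g.natDegree :=
      natDegree_map_eq_of_injective Int.cast_injective g
    -- every root of gC has norm < m - d
    have hroot : ∀ z ∈ gC.roots, ‖z‖ < (m : ℝ) - d := by
      intro z hz
      have hzr : gC.IsRoot z := (Polynomial.mem_roots hgC0).mp hz
      have hdvd : gC ∣ fC := Polynomial.map_dvd _ hgf
      have hzf : fC.IsRoot z := by
        obtain ⟨k, hk⟩ := hdvd
        rw [IsRoot] at hzr ⊢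
        rw [hk, eval_mul, hzr, zero_mul]
      have := hzf.norm_lt_cauchyBound hfC0
      calc ‖z‖ = (‖z‖₊ : ℝ) := rfl
        _ < (Polynomial.cauchyBound fC : ℝ) := by exact_mod_cast this
        _ ≤ (m : ℝ) - d := hCB
    have hsplit : Splits gC := IsAlgClosed.splits gC
    have hcard : Multiset.card gC.roots = gC.natDegree := splits_iff_card_roots.mp hsplit
    -- factorization and evaluation
    have heval : gC.eval ((m : ℤ) : ℂ) =
        gC.leadingCoeff * (gC.roots.map (fun a => ((m : ℤ) : ℂ) - a)).prod := by
      conv_lhs => rw [hsplit.eq_prod_roots]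
      rw [eval_mul, eval_C, eval_multiset_prod, Multiset.map_map]
      simp
    have hnorm : ‖gC.eval ((m : ℤ) : ℂ)‖ =
        ‖gC.leadingCoeff‖ * (gC.roots.map (fun a => ‖((m : ℤ) : ℂ) - a‖)).prod := by
      rw [heval, norm_mul]
      congr 1
      have := map_multiset_prod (normHom : ℂ →*₀ ℝ) (gC.roots.map (fun a => ((m : ℤ) : ℂ) - a))
      simpa [Multiset.map_map] using this
    have hleadg : (1:ℝ) ≤ ‖gC.leadingCoeff‖ := by
      have : gC.leadingCoeff = ((g.leadingCoeff : ℤ) : ℂ) := by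
        rw [leadingCoeff, hgCdeg, hgCdef, coeff_map, leadingCoeff]
        rfl
      rw [this, Complex.norm_intCast]
      exact_mod_cast Int.one_le_abs (by simpa [leadingCoeff_eq_zero] using hg0)
    -- each factor is > d, and there is at least one factor
    have hfac : ∀ a ∈ gC.roots, (d:ℝ) < ‖((m : ℤ) : ℂ) - a‖ := by
      intro a ha
      have h1 := hroot a ha
      have h2 : ‖((m : ℤ) : ℂ)‖ - ‖a‖ ≤ ‖((m : ℤ) : ℂ) - a‖ := norm_sub_norm_le _ _
      have h3 : ‖((m : ℤ) : ℂ)‖ = (m : ℝ) := by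
        push_cast
        simp [Complex.norm_natCast]
      linarith
    obtain ⟨r0, hr0⟩ : ∃ r0, r0 ∈ gC.roots := by
      rw [← Multiset.card_pos_iff_exists_mem, hcard, hgCdeg]
      omega
    obtain ⟨t, ht⟩ := Multiset.exists_cons_of_mem hr0
    have hd1 : (1:ℝ) ≤ (d:ℝ) := by exact_mod_cast hd
    have hrest : (1:ℝ) ≤ (t.map (fun a => ‖((m : ℤ) : ℂ) - a‖)).prod := by
      apply Multiset.one_le_prod
      intro x hx
      obtain ⟨a, ha, rfl⟩ := Multiset.mem_map.mp hx
      have : a ∈ gC.roots := by rw [ht]; exact Multiset.mem_cons_of_mem ha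
      linarith [hfac a this]
    have hbig : (d:ℝ) < ‖gC.eval ((m : ℤ) : ℂ)‖ := by
      rw [hnorm, ht, Multiset.map_cons, Multiset.prod_cons]
      have h1 := hfac r0 hr0
      have hx0 : (0:ℝ) ≤ ‖((m : ℤ) : ℂ) - r0‖ := norm_nonneg _
      have e1 : (d:ℝ) < ‖((m : ℤ) : ℂ) - r0‖ * (Multiset.map (fun a => ‖((m : ℤ) : ℂ) - a‖) t).prod := by
        nlinarith
      have e2 : ‖((m : ℤ) : ℂ) - r0‖ * (Multiset.map (fun a => ‖((m : ℤ) : ℂ) - a‖) t).prod ≤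
          ‖gC.leadingCoeff‖ * (‖((m : ℤ) : ℂ) - r0‖ * (Multiset.map (fun a => ‖((m : ℤ) : ℂ) - a‖) t).prod) := by
        apply le_mul_of_one_le_left _ hleadg
        nlinarith
      linarith
    have hcast : ‖gC.eval ((m : ℤ) : ℂ)‖ = |((g.eval (m:ℤ) : ℤ) : ℝ)| := by
      rw [hgCdef, eval_intCast_map]
      exact Complex.norm_intCast _
    rw [hcast] at hbig
    exact_mod_cast (by push_cast at hbig ⊢; exact hbig : ((d:ℤ):ℝ) < ((|g.eval (m:ℤ)| : ℤ) : ℝ))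
  -- main argument
  constructor
  · intro hu
    have := Polynomial.natDegree_eq_zero_of_isUnit hu
    omega
  · intro g h hf
    by_cases hg0 : g.natDegree = 0
    · left
      have hgC : g = C (g.coeff 0) := eq_C_of_natDegree_eq_zero hg0
      have : C (g.coeff 0) ∣ f := ⟨h, by rw [← hgC]; exact hf⟩
      rw [hgC]
      exact (Polynomial.isUnit_C).mpr (hprim _ this)
    by_cases hh0 : h.natDegree = 0
    · right
      have hhC : h = C (h.coeff 0) := eq_C_of_natDegree_eq_zero hh0
      have : C (h.coeff 0) ∣ f := ⟨g, by rw [← hhC, mul_comm]; exact hf⟩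
      rw [hhC]
      exact (Polynomial.isUnit_C).mpr (hprim _ this)
    exfalso
    have hgkey := key g ⟨h, hf⟩ (by omega)
    have hhkey := key h ⟨g, by rw [mul_comm]; exact hf⟩ (by omega)
    set A := g.eval (m:ℤ) with hA
    set B := h.eval (m:ℤ) with hB
    have hAB : A * B = f.eval (m:ℤ) := by rw [hf, eval_mul]
    have habs : |A| * |B| = (d:ℤ) * p := by
      rw [← abs_mul, hAB]
      rcases hval with hv | hv <;> rw [hv] <;>
        simp [abs_of_nonneg, mul_nonneg, Int.natCast_nonneg]
    have hpdvd : (p:ℤ) ∣ A * B := by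
      rw [hAB]
      rcases hval with hv | hv <;> rw [hv]
      · exact ⟨d, by ring⟩
      · exact ⟨-d, by ring⟩
    have hp2 : (2:ℤ) ≤ p := by exact_mod_cast hp.two_le
    rcases Int.Prime.dvd_mul hp hpdvd with hc | hc
    · have : (p:ℤ) ≤ |A| := by
        have h1 : (p:ℤ) ∣ |A| := by
          rw [Int.abs_eq_natAbs]
          exact_mod_cast hc
        exact Int.le_of_dvd (by linarith) h1
      nlinarith
    · have : (p:ℤ) ≤ |B| := by
        have h1 : (p:ℤ) ∣ |B| := by
          rw [Int.abs_eq_natAbs]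
          exact_mod_cast hc
        exact Int.le_of_dvd (by linarith) h1
      nlinarith
end

section
/- Let f ∈ ℝ[x] be a nonconstant polynomial with positive leading coefficient, and let v be a real number such that every complex root α of f satisfies Re(α) < v. Then all coefficients of the shifted polynomial g(x) = f(x + v) are nonnegative; consequently, |f(v − t)| ≤ |f(v + t)| for every real t ≥ 0. -/
open Polynomial

/-!
After the shift `g = f(x + v)` every root of `g` has negative real part. Splitting off one root
at a time, `g` is its leading coefficient times a product of real factors `X - r` with `r ≤ 0`
and `X² - 2 Re(z) X + |z|²` with `Re z ≤ 0`, all of which have nonnegative coefficients, and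
nonnegativity of coefficients is preserved by products. Once the coefficients of `g` are
nonnegative, `|g(-t)| ≤ g(t)` for `t ≥ 0` by the triangle inequality applied term by term.
-/

lemma coeff_mul_nonneg {p q : ℝ[X]} (hp : ∀ i, 0 ≤ p.coeff i) (hq : ∀ i, 0 ≤ q.coeff i) (i : ℕ) :
    0 ≤ (p * q).coeff i := by
  rw [coeff_mul]
  exact Finset.sum_nonneg fun x _ => mul_nonneg (hp _) (hq _)

lemma exists_monic_dvd_coeff_nonneg_of_aeval_eq_zero {g : ℝ[X]} {z : ℂ} (hz : aeval z g = 0)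
    (hre : z.re ≤ 0) :
    ∃ p : ℝ[X], p.Monic ∧ 0 < p.natDegree ∧ (∀ i, 0 ≤ p.coeff i) ∧ p ∣ g := by
  rcases eq_or_ne z.im 0 with him | him
  · have hroot : g.IsRoot z.re := by
      have hz' : z = algebraMap ℝ ℂ z.re := Complex.ext rfl him
      rw [hz', aeval_algebraMap_apply_eq_algebraMap_eval] at hz
      exact (map_eq_zero_iff _ (algebraMap ℝ ℂ).injective).mp hz
    refine ⟨X - C z.re, monic_X_sub_C _, by simp, fun i => ?_, dvd_iff_isRoot.mpr hroot⟩
    rcases i with _ | _ | i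
    · simpa using hre
    · simp
    · rw [coeff_eq_zero_of_natDegree_lt (by rw [natDegree_X_sub_C]; omega)]
  · have hdeg : (X ^ 2 - C (2 * z.re) * X + C (‖z‖ ^ 2)).natDegree = 2 := by compute_degree!
    refine ⟨_, by monicity!, by rw [hdeg]; norm_num, fun i => ?_,
      g.quadratic_dvd_of_aeval_eq_zero_im_ne_zero hz him⟩
    rcases i with _ | _ | _ | i
    · simp only [coeff_add, coeff_sub, coeff_C_mul, coeff_X_pow, coeff_X, coeff_C]; norm_num
    · simp only [coeff_add, coeff_sub, coeff_C_mul, coeff_X_pow, coeff_X, coeff_C]; norm_num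
      linarith
    · simp only [coeff_add, coeff_sub, coeff_C_mul, coeff_X_pow, coeff_X, coeff_C]; norm_num
    · rw [coeff_eq_zero_of_natDegree_lt (by omega)]

theorem coeff_nonneg_of_forall_re_nonpos {g : ℝ[X]} (hlead : 0 ≤ g.leadingCoeff)
    (hroots : ∀ z : ℂ, aeval z g = 0 → z.re ≤ 0) (i : ℕ) : 0 ≤ g.coeff i := by
  induction hn : g.natDegree using Nat.strong_induction_on generalizing g i with
  | _ n ih =>
  rcases Nat.eq_zero_or_pos n with rfl | hpos
  · rw [eq_C_of_natDegree_eq_zero hn, coeff_C]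
    split_ifs with hi
    · rwa [leadingCoeff, hn] at hlead
    · exact le_rfl
  obtain ⟨z, hz⟩ : ∃ z : ℂ, aeval z g = 0 :=
    IsAlgClosed.exists_aeval_eq_zero _ g (natDegree_pos_iff_degree_pos.mp (hn ▸ hpos)).ne'
  obtain ⟨p, hp, hpdeg, hpcoeff, q, rfl⟩ :=
    exists_monic_dvd_coeff_nonneg_of_aeval_eq_zero hz (hroots z hz)
  have hq : q ≠ 0 := by rintro rfl; simp at hn; omega
  rw [hp.natDegree_mul' hq] at hn
  rw [leadingCoeff_mul, hp.leadingCoeff, one_mul] at hlead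
  refine coeff_mul_nonneg hpcoeff (fun j => ih _ (by omega) hlead (fun w hw => ?_) j rfl) i
  exact hroots w (by rw [map_mul, hw, mul_zero])

lemma abs_eval_neg_le_eval_of_coeff_nonneg {g : ℝ[X]} (hg : ∀ i, 0 ≤ g.coeff i) {t : ℝ}
    (ht : 0 ≤ t) : |g.eval (-t)| ≤ g.eval t :=
  calc |g.eval (-t)| ≤ ∑ i ∈ Finset.range (g.natDegree + 1), |g.coeff i * (-t) ^ i| := by
        rw [eval_eq_sum_range]; exact Finset.abs_sum_le_sum_abs _ _
    _ = ∑ i ∈ Finset.range (g.natDegree + 1), g.coeff i * t ^ i := by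
        refine Finset.sum_congr rfl fun i _ => ?_
        rw [abs_mul, abs_of_nonneg (hg i), abs_pow, abs_neg, abs_of_nonneg ht]
    _ = g.eval t := (eval_eq_sum_range _).symm

theorem stmt_12_general (f : Polynomial ℝ) (hlead : 0 < f.leadingCoeff)
    (v : ℝ) (hroots : ∀ α : ℂ, Polynomial.aeval α f = 0 → α.re < v) :
    (∀ i, 0 ≤ (f.comp (X + C v)).coeff i) ∧
      ∀ t : ℝ, 0 ≤ t → |f.eval (v - t)| ≤ |f.eval (v + t)| := by
  rw [← taylor_apply]
  have hcoeff : ∀ i, 0 ≤ (taylor v f).coeff i := by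
    refine coeff_nonneg_of_forall_re_nonpos (by rw [leadingCoeff_taylor]; exact hlead.le)
      fun z hz => ?_
    have hshift := hroots (z + v) (by simpa [taylor_apply, aeval_comp] using hz)
    rw [Complex.add_re, Complex.ofReal_re] at hshift
    linarith
  refine ⟨hcoeff, fun t ht => ?_⟩
  have hbound := abs_eval_neg_le_eval_of_coeff_nonneg hcoeff ht
  rw [taylor_eval, taylor_eval, neg_add_eq_sub, add_comm] at hbound
  exact hbound.trans (le_abs_self _)

/-- If `f ∈ ℝ[x]` is nonconstant with positive leading coefficient and every
complex root `α` of `f` satisfies `Re α < v`, then all coefficients of `g(x) = f(x + v)` are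
nonnegative; consequently `|f(v - t)| ≤ |f(v + t)|` for all real `t ≥ 0`. -/
theorem stmt_12 (f : Polynomial ℝ) (hf : 0 < f.natDegree) (hlead : 0 < f.leadingCoeff)
    (v : ℝ) (hroots : ∀ α : ℂ, Polynomial.aeval α f = 0 → α.re < v) :
    (∀ i, 0 ≤ (f.comp (X + C v)).coeff i) ∧
      ∀ t : ℝ, 0 ≤ t → |f.eval (v - t)| ≤ |f.eval (v + t)| :=
  stmt_12_general f hlead v hroots
end

section
/- Let b ≥ 3 be an integer and let f = a_0 + a_1x + ⋯ + a_nx^n ∈ ℤ[x] be a polynomial of degree n ≥ 2 with a_n ≥ 1, a_{n−1} ≥ 0, and 0 ≤ a_i ≤ b − 1 for each i = 0, …, n−2. Then every complex zero α of f satisfies |b − α| > 1. -/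
open Polynomial

/-- If `b ≥ 3`, `f` has degree `n ≥ 2` with `aₙ ≥ 1`, `a_{n-1} ≥ 0` and
`0 ≤ aᵢ ≤ b - 1` for `i ≤ n - 2`, then every complex zero `α` of `f` satisfies `|b - α| > 1`. -/
theorem stmt_13 (b : ℤ) (hb : 3 ≤ b) (f : Polynomial ℤ) (n : ℕ) (hn : 2 ≤ n)
    (hdeg : f.natDegree = n)
    (hlead : 1 ≤ f.coeff n) (hsub : 0 ≤ f.coeff (n - 1))
    (hdig : ∀ i ≤ n - 2, 0 ≤ f.coeff i ∧ f.coeff i ≤ b - 1)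
    (α : ℂ) (hα : Polynomial.aeval α f = 0) :
    1 < ‖(b : ℂ) - α‖ := by
  by_contra hcon
  push_neg at hcon
  obtain ⟨m, rfl⟩ : ∃ m, n = m + 2 := ⟨n - 2, by omega⟩
  have hsub' : 0 ≤ f.coeff (m + 1) := by simpa using hsub
  have hdig' : ∀ i ≤ m, 0 ≤ f.coeff i ∧ f.coeff i ≤ b - 1 := by
    intro i hi; exact hdig i (by omega)
  -- real part bound
  have hre : (b : ℝ) - 1 ≤ α.re := by
    have h1 : ((b : ℂ) - α).re ≤ ‖(b : ℂ) - α‖ := Complex.re_le_norm _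
    simp only [Complex.sub_re, Complex.intCast_re] at h1
    linarith
  have hb2 : (2 : ℝ) ≤ (b : ℝ) - 1 := by
    have : (3 : ℝ) ≤ (b : ℝ) := by exact_mod_cast hb
    linarith
  set r := ‖α‖ with hrdef
  have hr2 : (2 : ℝ) ≤ r := le_trans (le_trans hb2 hre) (Complex.re_le_norm α)
  -- expand the polynomial
  have hsum : ∑ i ∈ Finset.range (m + 3), (f.coeff i : ℂ) * α ^ i = 0 := by
    rw [Polynomial.aeval_eq_sum_range] at hα
    rw [hdeg] at hα
    simpa [zsmul_eq_mul] using hα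
  rw [Finset.sum_range_succ, Finset.sum_range_succ] at hsum
  have heq : ((f.coeff (m + 2) : ℂ) * α + (f.coeff (m + 1) : ℂ)) * α ^ (m + 1)
      = - ∑ i ∈ Finset.range (m + 1), (f.coeff i : ℂ) * α ^ i := by
    linear_combination hsum
  -- take absolute values
  have habs : ‖(f.coeff (m + 2) : ℂ) * α + (f.coeff (m + 1) : ℂ)‖ * r ^ (m + 1)
      = ‖∑ i ∈ Finset.range (m + 1), (f.coeff i : ℂ) * α ^ i‖ := by
    rw [← norm_pow, ← norm_mul, heq, norm_neg]
  -- lower bound for the leading part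
  have hlow : (b : ℝ) - 1 ≤ ‖(f.coeff (m + 2) : ℂ) * α + (f.coeff (m + 1) : ℂ)‖ := by
    have h1 : ((f.coeff (m + 2) : ℂ) * α + (f.coeff (m + 1) : ℂ)).re
        ≤ ‖(f.coeff (m + 2) : ℂ) * α + (f.coeff (m + 1) : ℂ)‖ :=
      Complex.re_le_norm _
    have h2 : ((f.coeff (m + 2) : ℂ) * α + (f.coeff (m + 1) : ℂ)).re
        = (f.coeff (m + 2) : ℝ) * α.re + (f.coeff (m + 1) : ℝ) := by
      simp [Complex.add_re, Complex.mul_re]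
    have hc1 : (1 : ℝ) ≤ (f.coeff (m + 2) : ℝ) := by exact_mod_cast hlead
    have hc2 : (0 : ℝ) ≤ (f.coeff (m + 1) : ℝ) := by exact_mod_cast hsub'
    nlinarith [hre, hb2]
  -- upper bound for the tail
  have hup : ‖∑ i ∈ Finset.range (m + 1), (f.coeff i : ℂ) * α ^ i‖
      ≤ ((b : ℝ) - 1) * ∑ i ∈ Finset.range (m + 1), r ^ i := by
    calc ‖∑ i ∈ Finset.range (m + 1), (f.coeff i : ℂ) * α ^ i‖
        ≤ ∑ i ∈ Finset.range (m + 1), ‖(f.coeff i : ℂ) * α ^ i‖ := by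
          exact norm_sum_le _ _
      _ ≤ ∑ i ∈ Finset.range (m + 1), ((b : ℝ) - 1) * r ^ i := by
          apply Finset.sum_le_sum
          intro i hi
          rw [norm_mul, norm_pow]
          apply mul_le_mul_of_nonneg_right _ (pow_nonneg (by positivity) i)
          rw [Complex.norm_intCast]
          obtain ⟨h0, h1⟩ := hdig' i (Finset.mem_range_succ_iff.mp hi)
          rw [abs_of_nonneg (by exact_mod_cast h0)]
          have : (f.coeff i : ℝ) ≤ (b : ℝ) - 1 := by exact_mod_cast h1
          linarith
      _ = ((b : ℝ) - 1) * ∑ i ∈ Finset.range (m + 1), r ^ i := by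
          rw [Finset.mul_sum]
  -- geometric sum bound
  have hgeom : ∑ i ∈ Finset.range (m + 1), r ^ i ≤ r ^ (m + 1) - 1 := by
    have hmul : (∑ i ∈ Finset.range (m + 1), r ^ i) * (r - 1) = r ^ (m + 1) - 1 :=
      geom_sum_mul r (m + 1)
    have hpos : (0 : ℝ) ≤ ∑ i ∈ Finset.range (m + 1), r ^ i :=
      Finset.sum_nonneg fun i _ => pow_nonneg (by linarith) i
    nlinarith
  -- combine
  have hpow : (0 : ℝ) < r ^ (m + 1) := pow_pos (by linarith) _
  have hfinal : ((b : ℝ) - 1) * r ^ (m + 1) ≤ ((b : ℝ) - 1) * (r ^ (m + 1) - 1) := by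
    calc ((b : ℝ) - 1) * r ^ (m + 1)
        ≤ ‖(f.coeff (m + 2) : ℂ) * α + (f.coeff (m + 1) : ℂ)‖ * r ^ (m + 1) :=
          mul_le_mul_of_nonneg_right hlow (le_of_lt hpow)
      _ = ‖∑ i ∈ Finset.range (m + 1), (f.coeff i : ℂ) * α ^ i‖ := habs
      _ ≤ ((b : ℝ) - 1) * ∑ i ∈ Finset.range (m + 1), r ^ i := hup
      _ ≤ ((b : ℝ) - 1) * (r ^ (m + 1) - 1) :=
          mul_le_mul_of_nonneg_left hgeom (by linarith)
  nlinarith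
end

section
/- For every positive integer a, the polynomial x^4 + (4a + 2)x^2 + 1 is irreducible in ℤ[x]. -/
/-!
A monic factorisation over `ℤ` of `x⁴ + b x² + 1` has a factor of degree 1 or 2. A linear
factor would give an integer root, impossible since the polynomial is positive for `b ≥ 0`.
Two monic quadratic factors must be `(x² + p x + q)(x² - p x + q⁻¹)` with `q = ±1`, which
forces `b = 2q - p² ≤ 2`.
-/

open Polynomial

namespace Polynomial

theorem Monic.eq_X_sq_add_C_mul_X_add_C {R : Type*} [Semiring R] {p : R[X]} (hp : p.Monic)
    (hd : p.natDegree = 2) : p = X ^ 2 + C (p.coeff 1) * X + C (p.coeff 0) := by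
  have hp2 : p.coeff 2 = 1 := hd ▸ hp.coeff_natDegree
  conv_lhs => rw [eq_quadratic_of_degree_le_two (natDegree_le_iff_degree_le.mp hd.le), hp2]
  rw [C_1, one_mul]

theorem eval_X_pow_four_add_C_mul_X_sq_add_one_pos {R : Type*} [CommRing R] [LinearOrder R]
    [IsStrictOrderedRing R] {b : R} (hb : 0 ≤ b) (x : R) :
    0 < (X ^ 4 + C b * X ^ 2 + 1 : R[X]).eval x := by
  simp only [eval_add, eval_mul, eval_pow, eval_C, eval_X, eval_one]
  positivity

theorem coeffs_of_quadratic_mul_eq_X_pow_four_add_C_mul_X_sq_add_one {R : Type*} [CommRing R]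
    {b p q r s : R}
    (h : (X ^ 2 + C p * X + C q) * (X ^ 2 + C r * X + C s) = X ^ 4 + C b * X ^ 2 + 1) :
    q * s = 1 ∧ p + r = 0 ∧ q + s + p * r = b := by
  have hexpand : (X ^ 2 + C p * X + C q) * (X ^ 2 + C r * X + C s) =
      X ^ 4 + C (p + r) * X ^ 3 + C (q + s + p * r) * X ^ 2 + C (p * s + q * r) * X
        + C (q * s) := by
    simp only [C_add, C_mul]
    ring
  rw [hexpand] at h
  have hcoeff (n : ℕ) := congrArg (coeff · n) h
  simp only [coeff_add, coeff_C_mul, coeff_X_pow, coeff_X, coeff_C, coeff_one] at hcoeff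
  exact ⟨by simpa using hcoeff 0, by simpa using hcoeff 3, by simpa using hcoeff 2⟩

theorem le_two_of_monic_quadratic_mul_eq {b : ℤ} {g h : ℤ[X]} (hg : g.Monic) (hh : h.Monic)
    (hg2 : g.natDegree = 2) (hh2 : h.natDegree = 2)
    (hgh : g * h = X ^ 4 + C b * X ^ 2 + 1) : b ≤ 2 := by
  rw [hg.eq_X_sq_add_C_mul_X_add_C hg2, hh.eq_X_sq_add_C_mul_X_add_C hh2] at hgh
  obtain ⟨hunit, hsum, rfl⟩ := coeffs_of_quadratic_mul_eq_X_pow_four_add_C_mul_X_sq_add_one hgh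
  rw [eq_neg_of_add_eq_zero_right hsum]
  rcases Int.eq_one_or_neg_one_of_mul_eq_one' hunit with ⟨hq, hs⟩ | ⟨hq, hs⟩ <;>
    nlinarith [sq_nonneg (g.coeff 1)]

theorem irreducible_X_pow_four_add_C_mul_X_sq_add_one {b : ℤ} (hb : 2 < b) :
    Irreducible (X ^ 4 + C b * X ^ 2 + 1 : ℤ[X]) := by
  set P : ℤ[X] := X ^ 4 + C b * X ^ 2 + 1 with hP
  have hPdeg : P.natDegree = 4 := by rw [hP]; compute_degree!
  have hPmonic : P.Monic := by rw [hP]; monicity!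
  refine hPmonic.irreducible_iff_natDegree'.mpr ⟨fun h1 => by simp [h1] at hPdeg, ?_⟩
  intro f g hf hg hfg hgdeg
  rw [hPdeg] at hgdeg
  obtain hg1 | hg2 : g.natDegree = 1 ∨ g.natDegree = 2 := by simp at hgdeg; omega
  · have hroot : g.IsRoot (-g.coeff 0) := by
      rw [hg.eq_X_add_C hg1]
      simp
    have hProot := (hroot.dvd (Dvd.intro_left f hfg)).eq_zero
    exact (eval_X_pow_four_add_C_mul_X_sq_add_one_pos (by omega) _).ne' hProot
  · have hf2 : f.natDegree = 2 := by
      have := hf.natDegree_mul hg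
      rw [hfg, hPdeg, hg2] at this
      omega
    exact (le_two_of_monic_quadratic_mul_eq hf hg hf2 hg2 hfg).not_gt hb

end Polynomial

/-- For every positive integer `a`, the polynomial
`x⁴ + (4a + 2)x² + 1` is irreducible in `ℤ[x]`. -/
theorem stmt_14 (a : ℤ) (ha : 0 < a) :
    Irreducible (X ^ 4 + C (4 * a + 2) * X ^ 2 + 1 : Polynomial ℤ) :=
  irreducible_X_pow_four_add_C_mul_X_sq_add_one (by omega)
end

section
/- For every integer n ≥ 2, the polynomial x^{2n} + 2^{n−1} x + 2^n is irreducible in ℚ[x]. -/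
open Polynomial Finset

private lemma pow2_dvd_pow2 {s t : ℕ} (h : (2:ℤ)^s ∣ 2^t) : s ≤ t := by
  by_contra hc
  push_neg at hc
  have h2 : (2:ℤ)^(t+1) ∣ 2^t := dvd_trans (pow_dvd_pow 2 hc) h
  have h3 : (2:ℤ)^(t+1) ≤ 2^t := Int.le_of_dvd (by positivity) h2
  have h4 : (2:ℤ)^t < 2^(t+1) := by
    rw [pow_succ]
    nlinarith [pow_pos (show (0:ℤ) < 2 by norm_num) t]
  linarith

private lemma pv_dvd_iff {s : ℕ} {x : ℤ} (hx : x ≠ 0) :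
    (2:ℤ)^s ∣ x ↔ s ≤ padicValInt 2 x := by
  rw [show ((2:ℤ)) = ((2:ℕ):ℤ) by norm_num, padicValInt_dvd_iff]
  simp [hx]

private lemma dvd_pv (x : ℤ) : (2:ℤ)^(padicValInt 2 x) ∣ x := by
  exact_mod_cast padicValInt_dvd (p := 2) x

private lemma pv_one : padicValInt 2 (1 : ℤ) = 0 := by
  simp [padicValInt]

private lemma exists_argmin (f : ℕ → ℕ) (p : Polynomial ℤ) (hp : p ≠ 0) :
    ∃ i, p.coeff i ≠ 0 ∧ (∀ j, p.coeff j ≠ 0 → f i ≤ f j) ∧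
      (∀ i' < i, p.coeff i' ≠ 0 → f i < f i') := by
  classical
  have hex : ∃ i, p.coeff i ≠ 0 ∧ ∀ j, p.coeff j ≠ 0 → f i ≤ f j := by
    obtain ⟨i, hi, hmin⟩ := Finset.exists_min_image
      ((Finset.range (p.natDegree + 1)).filter fun i => p.coeff i ≠ 0) f
      ⟨p.natDegree, by
        simp [Finset.mem_filter, Finset.mem_range]
        exact hp⟩
    refine ⟨i, (Finset.mem_filter.mp hi).2, fun j hj => hmin j ?_⟩
    refine Finset.mem_filter.mpr ⟨Finset.mem_range.mpr ?_, hj⟩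
    exact Nat.lt_succ_of_le (Polynomial.le_natDegree_of_ne_zero hj)
  refine ⟨Nat.find hex, (Nat.find_spec hex).1, (Nat.find_spec hex).2, ?_⟩
  intro i' hi' hne
  have := Nat.find_min hex hi'
  push_neg at this
  obtain ⟨j, hj, hlt⟩ := this hne
  exact lt_of_le_of_lt ((Nat.find_spec hex).2 j hj) hlt

/-- For every integer `n ≥ 2`, the polynomial `x^{2n} + 2^{n-1}x + 2ⁿ`
is irreducible in `ℚ[x]`. -/
theorem stmt_18 (n : ℕ) (hn : 2 ≤ n) :
    Irreducible (X ^ (2 * n) + C ((2 : ℚ) ^ (n - 1)) * X + C ((2 : ℚ) ^ n)) := by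
  obtain ⟨N, hnN⟩ : ∃ N, n = N + 1 := ⟨n - 1, by omega⟩
  have hN1 : 1 ≤ N := by omega
  set F : ℤ[X] := X ^ (2*n) + C ((2:ℤ)^(n-1)) * X + C ((2:ℤ)^n) with hF
  have htail : degree (C ((2:ℤ)^(n-1)) * X + C ((2:ℤ)^n)) ≤ 1 := degree_linear_le
  have htail2 : degree (C ((2:ℤ)^(n-1)) * X + C ((2:ℤ)^n)) < ((2*n : ℕ) : WithBot ℕ) := by
    refine lt_of_le_of_lt htail ?_
    exact_mod_cast (by omega : 1 < 2*n)
  have hFmonic : F.Monic := by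
    rw [hF, add_assoc]
    exact monic_X_pow_add htail2
  have hFdeg : F.natDegree = 2*n := by
    have h1 : degree F = ((2*n : ℕ) : WithBot ℕ) := by
      rw [hF, add_assoc, degree_add_eq_left_of_degree_lt (by rw [degree_X_pow]; exact htail2),
        degree_X_pow]
    exact natDegree_eq_of_degree_eq_some h1
  have hcoeff : ∀ k, F.coeff k = (if k = 2*n then 1 else 0)
      + (2:ℤ)^(n-1) * (if 1 = k then 1 else 0) + (if k = 0 then (2:ℤ)^n else 0) := by
    intro k
    rw [hF]
    simp only [coeff_add, coeff_C_mul, coeff_X_pow, coeff_X, coeff_C]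
  have hc0 : F.coeff 0 = 2^n := by
    rw [hcoeff, if_neg (by omega : ¬ (0:ℕ) = 2*n), if_neg (by omega : ¬ (1:ℕ) = 0),
      if_pos rfl]; ring
  have hc1 : F.coeff 1 = 2^(n-1) := by
    rw [hcoeff, if_neg (by omega : ¬ (1:ℕ) = 2*n), if_pos rfl,
      if_neg (by omega : ¬ (1:ℕ) = 0)]; ring
  have hctop : F.coeff (2*n) = 1 := by
    rw [hcoeff, if_pos rfl, if_neg (by omega : ¬ (1:ℕ) = 2*n),
      if_neg (by omega : ¬ 2*n = 0)]; ring
  have hcmid : ∀ k, k ≠ 0 → k ≠ 1 → k ≠ 2*n → F.coeff k = 0 := by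
    intro k h0 h1 h2
    rw [hcoeff, if_neg h2, if_neg (by omega : ¬ (1:ℕ) = k), if_neg h0]; ring
  have hroot : ∀ z : ℤ, F.eval z ≠ 0 := by
    intro z hz
    rw [hF] at hz
    simp only [eval_add, eval_mul, eval_pow, eval_X, eval_C] at hz
    rw [hnN] at hz
    simp only [Nat.add_sub_cancel] at hz
    -- hz : z ^ (2 * (N + 1)) + 2 ^ N * z + 2 ^ (N + 1) = 0
    have h2z : (2:ℤ) ∣ z := by
      have hdvd : (2:ℤ) ∣ z ^ (2 * (N + 1)) := by
        have hrw : z ^ (2 * (N + 1)) = -(2 ^ N * z) - 2 ^ (N + 1) := by linarith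
        rw [hrw]
        exact dvd_sub (dvd_neg.mpr (((dvd_pow_self 2 (by omega : N ≠ 0))).mul_right z))
          (dvd_pow_self 2 (by omega : N + 1 ≠ 0))
      exact Int.prime_two.dvd_of_dvd_pow hdvd
    obtain ⟨d, rfl⟩ := h2z
    have heq0 : (2:ℤ)^(N+1) * (2^(N+1) * d^(2*(N+1)) + d + 1) = 0 := by
      linear_combination hz
    have heq : (2:ℤ)^(N+1) * d^(2*(N+1)) + d + 1 = 0 := by
      have := mul_eq_zero.mp heq0
      rcases this with h | h
      · exact absurd h (by positivity)
      · exact h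
    rcases eq_or_ne d 0 with rfl | hd
    · simp at heq
    · have hp0 : (0:ℤ) < d ^ (2*(N+1)) := by
        have : d ^ (2*(N+1)) = (d^(N+1))^2 := by ring
        rw [this]
        exact lt_of_le_of_ne (sq_nonneg _) (Ne.symm (pow_ne_zero 2 (pow_ne_zero _ hd)))
      have hp1 : (1:ℤ) ≤ d ^ (2*(N+1)) := hp0
      have hsd : d ≤ d ^ (2*(N+1)) := by
        rcases le_or_gt d 1 with h | h
        · exact le_trans h hp1
        · exact le_self_pow₀ (by linarith) (by omega)
      have hsnd : -d ≤ d ^ (2*(N+1)) := by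
        rcases le_or_gt (-d) 1 with h | h
        · exact le_trans h hp1
        · calc -d ≤ (-d) ^ (2*(N+1)) := le_self_pow₀ (by linarith) (by omega)
            _ = d ^ (2*(N+1)) := by rw [Even.neg_pow (even_two_mul (N+1))]
      have h4 : (4:ℤ) ≤ 2^(N+1) := by
        calc (4:ℤ) = 2^2 := by norm_num
          _ ≤ 2^(N+1) := pow_le_pow_right₀ (by norm_num) (by omega)
      have hA : 4 * d^(2*(N+1)) ≤ 2^(N+1) * d^(2*(N+1)) :=
        mul_le_mul_of_nonneg_right h4 (le_of_lt hp0)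
      linarith
  have hlin : ∀ P Q : ℤ[X], Q.Monic → Q.natDegree = 1 → F = P * Q → False := by
    intro P Q hQ hQ1 hPQ
    have hQeq : Q = X + C (Q.coeff 0) := hQ.eq_X_add_C hQ1
    have : F.eval (-(Q.coeff 0)) = 0 := by
      rw [hPQ, eval_mul, hQeq]
      simp
    exact hroot _ this
  have key : ∀ G H : ℤ[X], G.Monic → H.Monic → F = G * H → IsUnit G ∨ IsUnit H := by
    intro G H hG hH hGH
    by_cases ha0 : G.natDegree = 0
    · left
      rw [hG.natDegree_eq_zero.mp ha0]
      exact isUnit_one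
    by_cases hb0 : H.natDegree = 0
    · right
      rw [hH.natDegree_eq_zero.mp hb0]
      exact isUnit_one
    exfalso
    have hab : G.natDegree + H.natDegree = 2*n := by
      rw [← hFdeg, hGH, hG.natDegree_mul hH]
    set vG : ℕ → ℕ := fun i => padicValInt 2 (G.coeff i) with hvG
    set vH : ℕ → ℕ := fun i => padicValInt 2 (H.coeff i) with hvH
    obtain ⟨i₀, hGi0, hGmin, hGlt⟩ :=
      exists_argmin (fun i => (2*N+1) * vG i + N * i) G hG.ne_zero
    obtain ⟨j₀, hHj0, hHmin, hHlt⟩ :=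
      exists_argmin (fun j => (2*N+1) * vH j + N * j) H hH.ne_zero
    -- CROSS lemma
    have cross : ∀ i j s : ℕ, (i < i₀ ∨ j < j₀) →
        (2*N+1) * s + N * (i + j) <
          ((2*N+1) * (vG i₀ + vH j₀) + N * (i₀ + j₀)) + 1 + (2*N+1) →
        (2:ℤ)^s ∣ G.coeff i * H.coeff j := by
      intro i j s hij hs
      by_cases hGi : G.coeff i = 0
      · simp [hGi]
      by_cases hHj : H.coeff j = 0
      · simp [hHj]
      have hkey : ((2*N+1) * (vG i₀ + vH j₀) + N * (i₀ + j₀)) + 1 ≤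
          (2*N+1) * (vG i + vH j) + N * (i + j) := by
        rcases hij with h | h
        · have h1 := hGlt i h hGi
          have h2 := hHmin j hHj
          simp only [mul_add, add_mul] at *
          linarith
        · have h1 := hHlt j h hHj
          have h2 := hGmin i hGi
          simp only [mul_add, add_mul] at *
          linarith
      have hs2 : (2*N+1) * s < (2*N+1) * (vG i + vH j + 1) := by
        simp only [mul_add, mul_one] at *
        linarith
      have hs3 : s ≤ vG i + vH j := by
        have := Nat.lt_of_mul_lt_mul_left hs2
        omega
      calc (2:ℤ)^s ∣ 2^(vG i + vH j) := pow_dvd_pow 2 hs3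
        _ = 2^(vG i) * 2^(vH j) := pow_add 2 _ _
        _ ∣ G.coeff i * H.coeff j := mul_dvd_mul (dvd_pv _) (dvd_pv _)
    -- EXACTNESS at k = i₀ + j₀
    have hmem : (⟨i₀, j₀⟩ : ℕ × ℕ) ∈ Finset.HasAntidiagonal.antidiagonal (i₀ + j₀) := by
      simp [Finset.HasAntidiagonal.mem_antidiagonal]
    have hsplit : F.coeff (i₀ + j₀) = G.coeff i₀ * H.coeff j₀ +
        ∑ p ∈ (Finset.HasAntidiagonal.antidiagonal (i₀ + j₀)).erase (i₀, j₀),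
          G.coeff p.1 * H.coeff p.2 := by
      rw [hGH, coeff_mul]
      exact (Finset.add_sum_erase _ _ hmem).symm
    have hrest : (2:ℤ)^(vG i₀ + vH j₀ + 1) ∣
        ∑ p ∈ (Finset.HasAntidiagonal.antidiagonal (i₀ + j₀)).erase (i₀, j₀),
          G.coeff p.1 * H.coeff p.2 := by
      apply Finset.dvd_sum
      intro p hp
      obtain ⟨hne, hpk⟩ := Finset.mem_erase.mp hp
      have hpk' : p.1 + p.2 = i₀ + j₀ := Finset.HasAntidiagonal.mem_antidiagonal.mp hpk
      have hor : p.1 < i₀ ∨ p.2 < j₀ := by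
        by_contra hcon
        push_neg at hcon
        exact hne (Prod.ext (by omega) (by omega))
      exact cross p.1 p.2 _ hor (by rw [hpk']; ring_nf; omega)
    have hprodv : padicValInt 2 (G.coeff i₀ * H.coeff j₀) = vG i₀ + vH j₀ :=
      padicValInt.mul hGi0 hHj0
    have hprne : G.coeff i₀ * H.coeff j₀ ≠ 0 := mul_ne_zero hGi0 hHj0
    have hFk : (2:ℤ)^(vG i₀ + vH j₀) ∣ F.coeff (i₀ + j₀) := by
      rw [hsplit]
      exact dvd_add ((pv_dvd_iff hprne).mpr (le_of_eq hprodv.symm))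
        (dvd_trans (pow_dvd_pow 2 (Nat.le_succ _)) hrest)
    have hFknot : ¬ (2:ℤ)^(vG i₀ + vH j₀ + 1) ∣ F.coeff (i₀ + j₀) := by
      intro hdvd
      have hj : (2:ℤ)^(vG i₀ + vH j₀ + 1) ∣ G.coeff i₀ * H.coeff j₀ := by
        have : G.coeff i₀ * H.coeff j₀ = F.coeff (i₀ + j₀) -
            ∑ p ∈ (Finset.HasAntidiagonal.antidiagonal (i₀ + j₀)).erase (i₀, j₀),
              G.coeff p.1 * H.coeff p.2 := by
          rw [hsplit]; ring
        rw [this]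
        exact dvd_sub hdvd hrest
      rw [pv_dvd_iff hprne, hprodv] at hj
      omega
    have hFkne : F.coeff (i₀ + j₀) ≠ 0 := by
      intro h
      exact hFknot (by rw [h]; exact dvd_zero _)
    have hk3 : i₀ + j₀ = 0 ∨ i₀ + j₀ = 1 ∨ i₀ + j₀ = 2*n := by
      by_contra hcon
      push_neg at hcon
      exact hFkne (hcmid _ hcon.1 hcon.2.1 hcon.2.2)
    -- monic gives bounds on the minima
    have hGtop : G.coeff G.natDegree = 1 := hG.coeff_natDegree
    have hHtop : H.coeff H.natDegree = 1 := hH.coeff_natDegree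
    have hminG : (2*N+1) * vG i₀ + N * i₀ ≤ N * G.natDegree := by
      have := hGmin G.natDegree (by rw [hGtop]; exact one_ne_zero)
      have hv1 : vG G.natDegree = 0 := by rw [hvG]; simp only; rw [hGtop, pv_one]
      rw [hv1, mul_zero, zero_add] at this
      exact this
    have hminH : (2*N+1) * vH j₀ + N * j₀ ≤ N * H.natDegree := by
      have := hHmin H.natDegree (by rw [hHtop]; exact one_ne_zero)
      have hv1 : vH H.natDegree = 0 := by rw [hvH]; simp only; rw [hHtop, pv_one]
      rw [hv1, mul_zero, zero_add] at this
      exact this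
    rcases hk3 with hk | hk | hk
    · -- k = 0 : impossible
      have hi0 : i₀ = 0 := by omega
      have hj0 : j₀ = 0 := by omega
      have hco : F.coeff (i₀ + j₀) = 2^n := by rw [hk]; exact hc0
      have hd1 : (2:ℤ)^(vG i₀ + vH j₀) ∣ 2^n := hco ▸ hFk
      have hd2 : ¬ (2:ℤ)^(vG i₀ + vH j₀ + 1) ∣ 2^n := hco ▸ hFknot
      have ht1 : vG i₀ + vH j₀ ≤ n := pow2_dvd_pow2 hd1
      have ht2 : ¬ (vG i₀ + vH j₀ + 1 ≤ n) := fun h => hd2 (pow_dvd_pow 2 h)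
      have ht : vG i₀ + vH j₀ = n := by omega
      -- (2N+1) * n ≤ N * 2n : contradiction
      have hle : (2*N+1) * (vG i₀ + vH j₀) + N * (i₀ + j₀) ≤
          N * G.natDegree + N * H.natDegree := by
        have := Nat.add_le_add hminG hminH
        simp only [mul_add] at *
        linarith
      rw [ht, hi0, hj0, ← Nat.mul_add, hab, hnN] at hle
      nlinarith
    · -- k = 1 : forces a linear factor
      have hco : F.coeff (i₀ + j₀) = 2^N := by
        rw [hk, hc1, show n - 1 = N by omega]
      have hd1 : (2:ℤ)^(vG i₀ + vH j₀) ∣ 2^N := hco ▸ hFk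
      have hd2 : ¬ (2:ℤ)^(vG i₀ + vH j₀ + 1) ∣ 2^N := hco ▸ hFknot
      have ht1 : vG i₀ + vH j₀ ≤ N := pow2_dvd_pow2 hd1
      have ht2 : ¬ (vG i₀ + vH j₀ + 1 ≤ N) := fun h => hd2 (pow_dvd_pow 2 h)
      have ht : vG i₀ + vH j₀ = N := by omega
      -- total equality
      have hsum : N * G.natDegree + N * H.natDegree =
          (2*N+1) * (vG i₀ + vH j₀) + N * (i₀ + j₀) := by
        rw [ht, hk, ← Nat.mul_add, hab, hnN]; ring
      have hGEq : (2*N+1) * vG i₀ + N * i₀ = N * G.natDegree := by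
        have h1 := hminG; have h2 := hminH
        simp only [mul_add] at *
        omega
      have hHEq : (2*N+1) * vH j₀ + N * j₀ = N * H.natDegree := by
        have h1 := hminG; have h2 := hminH
        simp only [mul_add] at *
        omega
      rcases (by omega : (i₀ = 0 ∧ j₀ = 1) ∨ (i₀ = 1 ∧ j₀ = 0)) with ⟨hi, hj⟩ | ⟨hi, hj⟩
      · -- (2N+1) ∣ N * a  ⇒ b = 1
        have hdvd : (2*N+1) ∣ N * G.natDegree := by
          refine ⟨vG i₀, ?_⟩
          rw [← hGEq, hi]; ring
        have hcop : Nat.Coprime (2*N+1) N := by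
          have : Nat.Coprime (1 + N * 2) N :=
            (Nat.coprime_add_mul_left_left 1 N 2).mpr (Nat.coprime_one_left N)
          rwa [show 1 + N * 2 = 2*N+1 by ring] at this
        have hdvda : (2*N+1) ∣ G.natDegree := hcop.dvd_of_dvd_mul_left hdvd
        have hlea : 2*N+1 ≤ G.natDegree := Nat.le_of_dvd (by omega) hdvda
        have hb1 : H.natDegree = 1 := by omega
        exact hlin G H hH hb1 hGH
      · have hdvd : (2*N+1) ∣ N * H.natDegree := by
          refine ⟨vH j₀, ?_⟩
          rw [← hHEq, hj]; ring
        have hcop : Nat.Coprime (2*N+1) N := by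
          have : Nat.Coprime (1 + N * 2) N :=
            (Nat.coprime_add_mul_left_left 1 N 2).mpr (Nat.coprime_one_left N)
          rwa [show 1 + N * 2 = 2*N+1 by ring] at this
        have hdvdb : (2*N+1) ∣ H.natDegree := hcop.dvd_of_dvd_mul_left hdvd
        have hleb : 2*N+1 ≤ H.natDegree := Nat.le_of_dvd (by omega) hdvdb
        have ha1 : G.natDegree = 1 := by omega
        exact hlin H G hG ha1 (by rw [hGH, mul_comm])
    · -- k = 2n : impossible, 2^n divides F.coeff 1 = 2^(n-1)
      have hdvd1 : (2:ℤ)^(N+1) ∣ F.coeff 1 := by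
        rw [hGH, coeff_mul]
        apply Finset.dvd_sum
        intro p hp
        have hpk : p.1 + p.2 = 1 := Finset.HasAntidiagonal.mem_antidiagonal.mp hp
        have hor : p.1 < i₀ ∨ p.2 < j₀ := by
          by_contra hcon
          push_neg at hcon
          omega
        refine cross p.1 p.2 (N+1) hor ?_
        have e2 : i₀ + j₀ = 2*(N+1) := by omega
        rw [hpk, e2]
        have hz := Nat.zero_le ((2*N+1) * (vG i₀ + vH j₀))
        have hring : (2*N+1)*(N+1) + N*1 + 1 = N*(2*(N+1)) + 1 + (2*N+1) := by ring
        linarith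
      rw [hc1, show n - 1 = N by omega] at hdvd1
      have := pow2_dvd_pow2 hdvd1
      omega
  have hFirr : Irreducible F := by
    constructor
    · intro hu
      have := natDegree_eq_zero_of_isUnit hu
      omega
    · intro G H hGH
      have hlc : G.leadingCoeff * H.leadingCoeff = 1 := by
        rw [← leadingCoeff_mul, ← hGH]
        exact hFmonic
      rcases Int.mul_eq_one_iff_eq_one_or_neg_one.mp hlc with ⟨h1, h2⟩ | ⟨h1, h2⟩
      · exact key G H h1 h2 hGH
      · have hm : (-G).Monic ∧ (-H).Monic := by
          constructor <;> simp [Monic, h1, h2]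
        rcases key (-G) (-H) hm.1 hm.2 (by rw [neg_mul_neg]; exact hGH) with h | h
        · left; simpa using h.neg
        · right; simpa using h.neg
  have hmap : F.map (Int.castRingHom ℚ) =
      X ^ (2 * n) + C ((2 : ℚ) ^ (n - 1)) * X + C ((2 : ℚ) ^ n) := by
    rw [hF]
    simp only [Polynomial.map_add, Polynomial.map_mul, Polynomial.map_pow, map_X, map_C, map_pow, map_ofNat, Polynomial.map_ofNat]
  rw [← hmap]
  exact (Polynomial.IsPrimitive.Int.irreducible_iff_irreducible_map_cast
    hFmonic.isPrimitive).mp hFirr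
end
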